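/- arXiv:1604.02862 — 6 statements merged into one kernel-verified Lean document; each statement's English description precedes it below -/
import Mathlib

section
/- Let S be a numerical semigroup and let ⋆ be a prime star operation on S. Then ⋆ is principal, i.e., ⋆ = ⋆_I for some fractional ideal I of S. -/
/-- A numerical semigroup: a subset of ℕ containing 0, closed under addition,
with finite complement. -/
structure NumSgp where
  carrier : Set ℕ
  zero_mem : 0 ∈ carrier
  add_mem : ∀ a ∈ carrier, ∀ b ∈ carrier, a + b ∈ carrier
  cofinite : carrierᶜ.Finite

/-- The copy of `S` inside ℤ. -/
def natS (S : NumSgp) : Set ℤ := (fun n : ℕ => (n : ℤ)) '' S.carrier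

/-- A fractional ideal of `S`: a nonempty subset of ℤ, bounded below, with `I + S ⊆ I`. -/
def IsFracIdeal (S : NumSgp) (I : Set ℤ) : Prop :=
  I.Nonempty ∧ BddBelow I ∧ ∀ i ∈ I, ∀ s ∈ natS S, i + s ∈ I

/-- `(I − J) = {x ∈ ℤ : x + J ⊆ I}`. -/
def idealSub (I J : Set ℤ) : Set ℤ := {x : ℤ | ∀ j ∈ J, x + j ∈ I}

/-- `F₀(S)`: fractional ideals `I` with `S ⊆ I ⊆ ℕ` (hence with minimal element 0). -/
def F0 (S : NumSgp) : Set (Set ℤ) :=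
  {I | IsFracIdeal S I ∧ natS S ⊆ I ∧ I ⊆ {x : ℤ | 0 ≤ x}}

/-- The `v`-operation (divisorial closure): `I ↦ (S − (S − I))`. -/
def vOp (S : NumSgp) (I : Set ℤ) : Set ℤ := idealSub (natS S) (idealSub (natS S) I)

/-- An ideal is divisorial if it is `v`-closed. -/
def Divisorial (S : NumSgp) (I : Set ℤ) : Prop := vOp S I = I

/-- `G₀(S)`: the nondivisorial ideals in `F₀(S)`. -/
def G0 (S : NumSgp) : Set (Set ℤ) := {I | I ∈ F0 S ∧ ¬ Divisorial S I}

/-- The action of the star operation `⋆_I` generated by `I`: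
`J ↦ J^{⋆_I} = J^v ∩ (I − (I − J))`. -/
def starI (S : NumSgp) (I J : Set ℤ) : Set ℤ := vOp S J ∩ idealSub I (idealSub I J)

/-- The action of the star operation `⋆_Δ = inf_{I ∈ Δ} ⋆_I` generated by a set `Δ` of ideals:
`J ↦ J^{⋆_Δ} = J^v ∩ ⋂_{I ∈ Δ} (I − (I − J))`. -/
def starD (S : NumSgp) (Δ : Set (Set ℤ)) (J : Set ℤ) : Set ℤ :=
  vOp S J ∩ ⋂ I ∈ Δ, idealSub I (idealSub I J)

/-- The ⋆-order: `I ≤⋆ J` iff `I` is `⋆_J`-closed. -/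
def starle (S : NumSgp) (I J : Set ℤ) : Prop := starI S J I = I

/-- A star operation on `S`, given by its action on subsets of ℤ; it is normalized to be
the identity outside the fractional ideals, so that two star operations are equal iff they
agree on all fractional ideals. -/
structure StarOp (S : NumSgp) where
  toFun : Set ℤ → Set ℤ
  isFrac : ∀ I, IsFracIdeal S I → IsFracIdeal S (toFun I)
  subset_star : ∀ I, IsFracIdeal S I → I ⊆ toFun I
  mono : ∀ I J, IsFracIdeal S I → IsFracIdeal S J → I ⊆ J → toFun I ⊆ toFun J
  idem : ∀ I, IsFracIdeal S I → toFun (toFun I) = toFun I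
  transl : ∀ I, IsFracIdeal S I → ∀ a : ℤ,
    toFun ((fun x => a + x) '' I) = (fun x => a + x) '' toFun I
  star_S : toFun (natS S) = natS S
  default_eq : ∀ I, ¬ IsFracIdeal S I → toFun I = I

/-- The order on star operations: `s ≤ t` iff `I^s ⊆ I^t` for every fractional ideal `I`. -/
def StarOp.le {S : NumSgp} (s t : StarOp S) : Prop :=
  ∀ I, IsFracIdeal S I → s.toFun I ⊆ t.toFun I

/-- A star operation `s` is prime if whenever `s ≥ t ∧ u` (the infimum of two star operations
being given by `I ↦ I^t ∩ I^u`), then `s ≥ t` or `s ≥ u`. -/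
def StarOp.IsPrime {S : NumSgp} (s : StarOp S) : Prop :=
  ∀ t u : StarOp S,
    (∀ I, IsFracIdeal S I → t.toFun I ∩ u.toFun I ⊆ s.toFun I) →
    t.le s ∨ u.le s

/-- `I ∈ F₀(S)` is an atom if the star operation `⋆_I` is prime. -/
def AtomIdeal (S : NumSgp) (I : Set ℤ) : Prop :=
  I ∈ F0 S ∧ ∀ t u : StarOp S,
    (∀ J, IsFracIdeal S J → t.toFun J ∩ u.toFun J ⊆ starI S I J) →
    (∀ J, IsFracIdeal S J → t.toFun J ⊆ starI S I J) ∨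
    (∀ J, IsFracIdeal S J → u.toFun J ⊆ starI S I J)

/-- `M_a = {x ∈ ℕ : a − x ∉ S}`, the biggest ideal in `F₀(S)` not containing `a`. -/
def Mdual (S : NumSgp) (a : ℕ) : Set ℤ := {x : ℤ | 0 ≤ x ∧ ((a : ℤ) - x) ∉ natS S}

/-- `Q_a(S) = {I ∈ F₀(S) : a = sup(ℕ \ I), a ∈ I^v}`. -/
def Qa (S : NumSgp) (a : ℕ) : Set (Set ℤ) :=
  {I | I ∈ F0 S ∧ (a : ℤ) ∉ I ∧ (∀ x : ℤ, (a : ℤ) < x → x ∈ I) ∧ (a : ℤ) ∈ vOp S I}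

/-- The number of antichains (with respect to inclusion) of a family of ideals. -/
noncomputable def numInclAnti (Q : Set (Set ℤ)) : ℕ :=
  Set.ncard {Δ : Set (Set ℤ) | Δ ⊆ Q ∧ IsAntichain (· ⊆ ·) Δ}

/-- The `n`-th Dedekind number: the number of antichains of the power set of an
`n`-element set, ordered by inclusion. -/
noncomputable def dedekind (n : ℕ) : ℕ :=
  Nat.card {A : Set (Set (Fin n)) // IsAntichain (· ⊆ ·) A}

/-- `T(S) = (S − M_S) \ S`. -/
def Tset (S : NumSgp) : Set ℤ :=
  idealSub (natS S) ((fun n : ℕ => (n : ℤ)) '' (S.carrier \ {0})) \ natS S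

/-- The type `t(S) = |T(S)|`. -/
noncomputable def typeNum (S : NumSgp) : ℕ := (Tset S).ncard

/-- The Frobenius number `g(S)`: the largest integer not in `S`. -/
noncomputable def frob (S : NumSgp) : ℕ := sSup S.carrierᶜ

/-- The multiplicity `μ(S)`: the smallest nonzero element of `S`. -/
noncomputable def multNum (S : NumSgp) : ℕ := sInf (S.carrier \ {0})

/-- The degree of singularity `δ(S) = |ℕ \ S|`. -/
noncomputable def deltaNum (S : NumSgp) : ℕ := S.carrierᶜ.ncard

/-- `S` is symmetric if `g(S) − a ∈ S` for every `a ∈ ℕ \ S`. -/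
def IsSymmetricSgp (S : NumSgp) : Prop :=
  ∀ a : ℕ, a ∉ S.carrier → ((frob S : ℤ) - (a : ℤ)) ∈ natS S

section Aux

set_option linter.unusedVariables false

open Set

variable {S : NumSgp}

lemma psp_mem_addImage {a x : ℤ} {X : Set ℤ} :
    x ∈ (fun y => a + y) '' X ↔ x - a ∈ X := by
  constructor
  · rintro ⟨y, hy, rfl⟩; simpa using hy
  · intro h; exact ⟨x - a, h, by ring⟩

lemma psp_natS_zero : (0 : ℤ) ∈ natS S := ⟨0, S.zero_mem, rfl⟩

lemma psp_natS_add {x y : ℤ} (hx : x ∈ natS S) (hy : y ∈ natS S) : x + y ∈ natS S := by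
  obtain ⟨m, hm, rfl⟩ := hx; obtain ⟨n, hn, rfl⟩ := hy
  exact ⟨m + n, S.add_mem m hm n hn, by push_cast; ring⟩

lemma psp_natS_nonneg {x : ℤ} (hx : x ∈ natS S) : 0 ≤ x := by
  obtain ⟨m, _, rfl⟩ := hx; positivity

lemma psp_natS_frac : IsFracIdeal S (natS S) :=
  ⟨⟨0, psp_natS_zero⟩, ⟨0, fun x hx => psp_natS_nonneg hx⟩,
    fun i hi t ht => psp_natS_add hi ht⟩

lemma psp_frob_mem {x : ℤ} (hx : (frob S : ℤ) < x) : x ∈ natS S := by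
  have hx0 : 0 ≤ x := le_trans (by positivity) (le_of_lt hx)
  refine ⟨x.toNat, ?_, Int.toNat_of_nonneg hx0⟩
  by_contra hmem
  have hle : x.toNat ≤ frob S := le_csSup (S.cofinite.bddAbove) hmem
  have : (x.toNat : ℤ) ≤ (frob S : ℤ) := by exact_mod_cast hle
  rw [Int.toNat_of_nonneg hx0] at this
  omega

lemma psp_idealSub_antitone {I X Y : Set ℤ} (h : X ⊆ Y) :
    idealSub I Y ⊆ idealSub I X := fun z hz j hj => hz j (h hj)

lemma psp_le_dd {I X : Set ℤ} : X ⊆ idealSub I (idealSub I X) :=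
  fun x hx y hy => by have := hy x hx; rwa [add_comm] at this

lemma psp_ddd {I X : Set ℤ} :
    idealSub I (idealSub I (idealSub I X)) = idealSub I X :=
  Set.Subset.antisymm (psp_idealSub_antitone psp_le_dd) psp_le_dd

lemma psp_dd_mono {I X Y : Set ℤ} (h : X ⊆ Y) :
    idealSub I (idealSub I X) ⊆ idealSub I (idealSub I Y) :=
  psp_idealSub_antitone (psp_idealSub_antitone h)

lemma psp_dd_idem {I X : Set ℤ} :
    idealSub I (idealSub I (idealSub I (idealSub I X))) = idealSub I (idealSub I X) := by
  rw [psp_ddd]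

lemma psp_idealSub_frac {I J : Set ℤ} (hI : IsFracIdeal S I) (hJ : IsFracIdeal S J) :
    IsFracIdeal S (idealSub I J) := by
  obtain ⟨⟨i, hi⟩, hIbdd, hIadd⟩ := hI
  obtain ⟨⟨j0, hj0⟩, ⟨b, hb⟩, hJadd⟩ := hJ
  refine ⟨⟨i + (frob S + 1) - b, fun j hj => ?_⟩, ?_, ?_⟩
  · have hmem : ((frob S : ℤ) + 1) + (j - b) ∈ natS S := by
      apply psp_frob_mem
      have := hb hj
      omega
    have := hIadd i hi _ hmem
    convert this using 1; ring
  · obtain ⟨c, hc⟩ := hIbdd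
    refine ⟨c - j0, fun x hx => ?_⟩
    have := hc (hx j0 hj0)
    omega
  · intro x hx t ht j hj
    have := hIadd _ (hx j hj) t ht
    convert this using 1; ring

lemma psp_idealSub_image_left {a : ℤ} {I X : Set ℤ} :
    idealSub ((fun y => a + y) '' I) X = (fun y => a + y) '' idealSub I X := by
  ext z
  constructor
  · intro h
    refine ⟨z - a, fun j hj => ?_, by ring⟩
    have := h j hj
    rw [psp_mem_addImage] at this
    rwa [show z - a + j = z + j - a by ring]
  · rintro ⟨y, hy, rfl⟩ j hj
    exact ⟨y + j, hy j hj, by ring⟩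

lemma psp_idealSub_image_right {a : ℤ} {I X : Set ℤ} :
    idealSub I ((fun y => a + y) '' X) = (fun y => -a + y) '' idealSub I X := by
  ext z
  constructor
  · intro h
    refine ⟨z + a, fun j hj => ?_, by ring⟩
    have := h (a + j) ⟨j, hj, rfl⟩
    rwa [show z + a + j = z + (a + j) by ring]
  · rintro ⟨y, hy, rfl⟩ j' hj'
    obtain ⟨j, hj, rfl⟩ := hj'
    have := hy j hj
    rwa [show -a + y + (a + j) = y + j by ring]

lemma psp_image_image {a : ℤ} {X : Set ℤ} :
    (fun y => a + y) '' ((fun y => -a + y) '' X) = X := by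
  ext z
  constructor
  · rintro ⟨y, ⟨w, hw, rfl⟩, rfl⟩
    simpa using hw
  · intro h
    exact ⟨-a + z, ⟨z, h, rfl⟩, by ring⟩

lemma psp_e_transl_left {a : ℤ} {I X : Set ℤ} :
    idealSub ((fun y => a + y) '' I) (idealSub ((fun y => a + y) '' I) X)
      = idealSub I (idealSub I X) := by
  rw [psp_idealSub_image_left, psp_idealSub_image_left, psp_idealSub_image_right,
    psp_image_image]

lemma psp_image_frac {a : ℤ} {I : Set ℤ} (hI : IsFracIdeal S I) :
    IsFracIdeal S ((fun y => a + y) '' I) := by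
  obtain ⟨⟨i, hi⟩, ⟨b, hb⟩, hadd⟩ := hI
  refine ⟨⟨a + i, ⟨i, hi, rfl⟩⟩, ⟨a + b, ?_⟩, ?_⟩
  · rintro x ⟨y, hy, rfl⟩
    have := hb hy
    simp only []
    omega
  · rintro x ⟨y, hy, rfl⟩ t ht
    exact ⟨y + t, hadd y hy t ht, by ring⟩

end Aux

section Aux2

set_option linter.unusedVariables false
set_option maxHeartbeats 1000000

open Set

variable {S : NumSgp}

lemma psp_vOp_le_dd {J : Set ℤ} : J ⊆ vOp S J := psp_le_dd

lemma psp_subset_starD {Δ : Set (Set ℤ)} {J : Set ℤ} : J ⊆ starD S Δ J := by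
  intro x hx
  refine ⟨psp_le_dd hx, ?_⟩
  simp only [Set.mem_iInter]
  intro I hI
  exact psp_le_dd hx

lemma psp_vOp_frac {J : Set ℤ} (hJ : IsFracIdeal S J) : IsFracIdeal S (vOp S J) :=
  psp_idealSub_frac psp_natS_frac (psp_idealSub_frac psp_natS_frac hJ)

lemma psp_starD_frac {Δ : Set (Set ℤ)} (hΔ : ∀ I ∈ Δ, IsFracIdeal S I)
    {J : Set ℤ} (hJ : IsFracIdeal S J) : IsFracIdeal S (starD S Δ J) := by
  obtain ⟨j0, hj0⟩ := hJ.1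
  refine ⟨⟨j0, psp_subset_starD hj0⟩, ?_, ?_⟩
  · exact (psp_vOp_frac hJ).2.1.mono Set.inter_subset_left
  · rintro x ⟨hxv, hxi⟩ t ht
    refine ⟨(psp_vOp_frac hJ).2.2 x hxv t ht, ?_⟩
    simp only [Set.mem_iInter] at hxi ⊢
    intro I hI j hj
    have := (hΔ I hI).2.2 _ (hxi I hI j hj) t ht
    rwa [show x + j + t = x + t + j by ring] at this

lemma psp_starD_mono {Δ : Set (Set ℤ)} {J J' : Set ℤ} (h : J ⊆ J') :
    starD S Δ J ⊆ starD S Δ J' := by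
  rintro x ⟨hxv, hxi⟩
  refine ⟨psp_dd_mono h hxv, ?_⟩
  simp only [Set.mem_iInter] at hxi ⊢
  intro I hI
  exact psp_dd_mono h (hxi I hI)

lemma psp_starD_idem {Δ : Set (Set ℤ)} {J : Set ℤ} :
    starD S Δ (starD S Δ J) = starD S Δ J := by
  refine Set.Subset.antisymm ?_ psp_subset_starD
  rintro x ⟨hxv, hxi⟩
  constructor
  · have h1 : starD S Δ J ⊆ vOp S J := Set.inter_subset_left
    have := psp_dd_mono (I := natS S) h1 hxv
    simp only [vOp] at this ⊢
    rwa [psp_dd_idem] at this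
  · simp only [Set.mem_iInter] at hxi ⊢
    intro I hI
    have h1 : starD S Δ J ⊆ idealSub I (idealSub I J) := by
      refine Set.inter_subset_right.trans ?_
      intro y hy
      simp only [Set.mem_iInter] at hy
      exact hy I hI
    have := psp_dd_mono (I := I) h1 (hxi I hI)
    rwa [psp_dd_idem] at this

lemma psp_vOp_transl {a : ℤ} {J : Set ℤ} :
    vOp S ((fun y => a + y) '' J) = (fun y => a + y) '' vOp S J := by
  unfold vOp
  rw [psp_idealSub_image_right, psp_idealSub_image_right, neg_neg]

lemma psp_e_transl_right {a : ℤ} {I X : Set ℤ} :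
    idealSub I (idealSub I ((fun y => a + y) '' X))
      = (fun y => a + y) '' idealSub I (idealSub I X) := by
  rw [psp_idealSub_image_right, psp_idealSub_image_right, neg_neg]

lemma psp_starD_transl {Δ : Set (Set ℤ)} {a : ℤ} {J : Set ℤ} :
    starD S Δ ((fun y => a + y) '' J) = (fun y => a + y) '' starD S Δ J := by
  ext x
  simp only [starD, Set.mem_inter_iff, Set.mem_iInter, psp_vOp_transl, psp_e_transl_right,
    psp_mem_addImage]

lemma psp_vOp_natS : vOp S (natS S) = natS S := by
  refine Set.Subset.antisymm ?_ psp_le_dd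
  intro x hx
  have h0 : (0:ℤ) ∈ idealSub (natS S) (natS S) := fun j hj => by simpa using hj
  simpa using hx 0 h0

lemma psp_starD_S {Δ : Set (Set ℤ)} : starD S Δ (natS S) = natS S := by
  refine Set.Subset.antisymm ?_ psp_subset_starD
  intro x hx
  have := hx.1
  rwa [psp_vOp_natS] at this

open Classical in
/-- Auxiliary: action of `⋆_Δ`, normalized to be the identity off fractional ideals. -/
noncomputable def starDfun (S : NumSgp) (Δ : Set (Set ℤ)) (J : Set ℤ) : Set ℤ :=
  if IsFracIdeal S J then starD S Δ J else J

lemma psp_starDfun_pos {Δ : Set (Set ℤ)} {J : Set ℤ} (hJ : IsFracIdeal S J) :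
    starDfun S Δ J = starD S Δ J := by
  simp only [starDfun, if_pos hJ]

lemma psp_starDfun_neg {Δ : Set (Set ℤ)} {J : Set ℤ} (hJ : ¬ IsFracIdeal S J) :
    starDfun S Δ J = J := by
  simp only [starDfun, if_neg hJ]

/-- The star operation `⋆_Δ` attached to a set `Δ` of fractional ideals. -/
noncomputable def starDOp (S : NumSgp) (Δ : Set (Set ℤ)) (hΔ : ∀ I ∈ Δ, IsFracIdeal S I) :
    StarOp S where
  toFun := starDfun S Δ
  isFrac J hJ := by rw [psp_starDfun_pos hJ]; exact psp_starD_frac hΔ hJ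
  subset_star J hJ := by rw [psp_starDfun_pos hJ]; exact psp_subset_starD
  mono I J hI hJ h := by rw [psp_starDfun_pos hI, psp_starDfun_pos hJ]; exact psp_starD_mono h
  idem J hJ := by
    rw [psp_starDfun_pos hJ, psp_starDfun_pos (psp_starD_frac hΔ hJ), psp_starD_idem]
  transl J hJ a := by
    rw [psp_starDfun_pos (psp_image_frac hJ), psp_starDfun_pos hJ, psp_starD_transl]
  star_S := by rw [psp_starDfun_pos psp_natS_frac, psp_starD_S]
  default_eq J hJ := psp_starDfun_neg hJ

lemma psp_starDOp_apply {Δ : Set (Set ℤ)} (hΔ : ∀ I ∈ Δ, IsFracIdeal S I)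
    {J : Set ℤ} (hJ : IsFracIdeal S J) :
    (starDOp S Δ hΔ).toFun J = starD S Δ J := psp_starDfun_pos hJ

lemma psp_starD_singleton {I J : Set ℤ} : starD S {I} J = starI S I J := by
  simp [starD, starI]

lemma psp_starD_empty {J : Set ℤ} : starD S ∅ J = vOp S J := by
  simp [starD]

lemma psp_starD_insert {Δ : Set (Set ℤ)} {I J : Set ℤ} :
    starD S (insert I Δ) J = starD S {I} J ∩ starD S Δ J := by
  ext x
  simp only [starD, Set.mem_inter_iff, Set.mem_iInter, Set.mem_insert_iff,
    Set.mem_singleton_iff]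
  constructor
  · rintro ⟨hv, hi⟩
    exact ⟨⟨hv, fun I' h => by subst h; exact hi I' (Or.inl rfl)⟩,
      ⟨hv, fun I' h => hi I' (Or.inr h)⟩⟩
  · rintro ⟨⟨hv, h1⟩, ⟨-, h2⟩⟩
    refine ⟨hv, fun I' h => ?_⟩
    rcases h with h | h
    · subst h; exact h1 I' rfl
    · exact h2 I' h

lemma psp_star_le_v (s : StarOp S) {J : Set ℤ} (hJ : IsFracIdeal S J) :
    s.toFun J ⊆ vOp S J := by
  intro x hx y hy
  have hsub : J ⊆ (fun z => -y + z) '' natS S := fun j hj => ⟨y + j, hy j hj, by ring⟩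
  have h1 := s.mono J _ hJ (psp_image_frac psp_natS_frac) hsub hx
  rw [s.transl _ psp_natS_frac (-y), s.star_S, psp_mem_addImage] at h1
  rwa [show x + y = x - -y by ring]

lemma psp_star_le_closed (s : StarOp S) {I J : Set ℤ} (hI : IsFracIdeal S I)
    (hJ : IsFracIdeal S J) (hcl : s.toFun I = I) :
    s.toFun J ⊆ idealSub I (idealSub I J) := by
  intro x hx y hy
  have hsub : J ⊆ (fun z => -y + z) '' I := fun j hj => ⟨y + j, hy j hj, by ring⟩
  have h1 := s.mono J _ hJ (psp_image_frac hI) hsub hx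
  rw [s.transl I hI (-y), hcl, psp_mem_addImage] at h1
  rwa [show x + y = x - -y by ring]

lemma psp_F0_finite : (F0 S).Finite := by
  have key : ∀ A B : Set ℤ, A ∈ F0 S → B ∈ F0 S →
      A ∩ Set.Icc (0:ℤ) (frob S) = B ∩ Set.Icc (0:ℤ) (frob S) → A ⊆ B := by
    intro A B hA hB hAB x hx
    by_cases hle : x ≤ (frob S : ℤ)
    · have hx0 : (0:ℤ) ≤ x := hA.2.2 hx
      have hmem : x ∈ A ∩ Set.Icc (0:ℤ) (frob S) := ⟨hx, hx0, hle⟩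
      rw [hAB] at hmem
      exact hmem.1
    · exact hB.2.1 (psp_frob_mem (by omega))
  apply Set.Finite.of_finite_image (f := fun I => I ∩ Set.Icc (0:ℤ) (frob S))
  · refine Set.Finite.subset ((Set.finite_Icc (0:ℤ) (frob S)).finite_subsets) ?_
    rintro _ ⟨I, hI, rfl⟩
    exact Set.inter_subset_right
  · intro I hI I' hI' h
    exact Set.Subset.antisymm (key _ _ hI hI' h) (key _ _ hI' hI h.symm)

end Aux2


/-- Every prime star operation on a numerical semigroup is principal:
`⋆ = ⋆_I` for some fractional ideal `I`. -/
theorem prime_star_is_principal (S : NumSgp) (s : StarOp S) (hs : s.IsPrime) :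
    ∃ I : Set ℤ, IsFracIdeal S I ∧ ∀ J, IsFracIdeal S J → s.toFun J = starI S I J := by
  classical
  set Δ : Set (Set ℤ) := {I | I ∈ F0 S ∧ s.toFun I = I} with hΔdef
  have hΔF0 : Δ ⊆ F0 S := fun I hI => hI.1
  have hΔfin : Δ.Finite := psp_F0_finite.subset hΔF0
  -- the operation `s` lies above `⋆_Δ`
  have hkey : ∀ J, IsFracIdeal S J → starD S Δ J ⊆ s.toFun J := by
    intro J hJ x hx
    have hsJ : IsFracIdeal S (s.toFun J) := s.isFrac J hJ
    have hex : ∃ m, m ∈ s.toFun J ∧ ∀ z ∈ s.toFun J, m ≤ z := by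
      obtain ⟨⟨i0, hi0⟩, ⟨b, hb⟩, -⟩ := hsJ
      obtain ⟨lb, hlb1, hlb2⟩ := Int.exists_least_of_bdd (P := fun z => z ∈ s.toFun J)
        ⟨b, fun z hz => hb hz⟩ ⟨i0, hi0⟩
      exact ⟨lb, hlb1, hlb2⟩
    obtain ⟨m, hm, hmin⟩ := hex
    set I0 : Set ℤ := (fun y => -m + y) '' s.toFun J with hI0def
    have hI0frac : IsFracIdeal S I0 := psp_image_frac hsJ
    have hI0closed : s.toFun I0 = I0 := by
      rw [hI0def, s.transl _ hsJ (-m), s.idem J hJ]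
    have hI0F0 : I0 ∈ F0 S := by
      refine ⟨hI0frac, ?_, ?_⟩
      · intro n hn
        have h0 : (0:ℤ) ∈ I0 := ⟨m, hm, by ring⟩
        have := hI0frac.2.2 0 h0 n hn
        simpa using this
      · rintro x' ⟨y, hy, rfl⟩
        have := hmin y hy
        simp only [Set.mem_setOf_eq]
        omega
    have hI0Δ : I0 ∈ Δ := ⟨hI0F0, hI0closed⟩
    obtain ⟨hxv, hxint⟩ := hx
    have hxe : x ∈ idealSub I0 (idealSub I0 J) := by
      simp only [Set.mem_iInter] at hxint
      exact hxint I0 hI0Δ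
    rw [hI0def, psp_e_transl_left] at hxe
    have h0 : (0:ℤ) ∈ idealSub (s.toFun J) J := fun j hj => by
      simpa using s.subset_star J hJ hj
    have := hxe 0 h0
    simpa using this
  -- finite induction on subsets of `Δ`
  have main : ∀ F : Finset (Set ℤ), ↑F ⊆ Δ →
      (∀ J, IsFracIdeal S J → starD S ↑F J ⊆ s.toFun J) →
      ∃ I : Set ℤ, IsFracIdeal S I ∧ ∀ J, IsFracIdeal S J → s.toFun J = starI S I J := by
    intro F
    induction F using Finset.induction_on with
    | empty =>
      intro _ h
      refine ⟨natS S, psp_natS_frac, fun J hJ => ?_⟩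
      have h2 : vOp S J ⊆ s.toFun J := by
        intro x hx
        apply h J hJ
        rw [Finset.coe_empty, psp_starD_empty]
        exact hx
      have heq : s.toFun J = vOp S J :=
        Set.Subset.antisymm (psp_star_le_v s hJ) h2
      rw [heq]
      exact (Set.inter_self (vOp S J)).symm
    | @insert I F hIF ih =>
      intro hsub h
      have hIΔ : I ∈ Δ := hsub (by simp)
      have hFΔ : ↑F ⊆ Δ := fun x hx => hsub (by simp [hx])
      have hIfrac : IsFracIdeal S I := (hΔF0 hIΔ).1
      have hIcl : s.toFun I = I := hIΔ.2
      have hsingfrac : ∀ I' ∈ ({I} : Set (Set ℤ)), IsFracIdeal S I' := by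
        intro I' hI'
        rw [Set.mem_singleton_iff] at hI'
        subst hI'; exact hIfrac
      have hFfrac : ∀ I' ∈ (↑F : Set (Set ℤ)), IsFracIdeal S I' :=
        fun I' hI' => (hΔF0 (hFΔ hI')).1
      have hcond : ∀ J, IsFracIdeal S J →
          (starDOp S {I} hsingfrac).toFun J ∩ (starDOp S ↑F hFfrac).toFun J ⊆ s.toFun J := by
        intro J hJ
        rw [psp_starDOp_apply _ hJ, psp_starDOp_apply _ hJ]
        intro x hx
        apply h J hJ
        rw [Finset.coe_insert, psp_starD_insert]
        exact hx
      rcases hs (starDOp S {I} hsingfrac) (starDOp S ↑F hFfrac) hcond with ht | hu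
      · refine ⟨I, hIfrac, fun J hJ => ?_⟩
        refine Set.Subset.antisymm ?_ ?_
        · intro x hx
          exact ⟨psp_star_le_v s hJ hx, psp_star_le_closed s hIfrac hJ hIcl hx⟩
        · intro x hx
          have := ht J hJ
          rw [psp_starDOp_apply _ hJ, psp_starD_singleton] at this
          exact this hx
      · apply ih hFΔ
        intro J hJ
        have := hu J hJ
        rwa [psp_starDOp_apply _ hJ] at this
  refine main hΔfin.toFinset ?_ ?_
  · simp
  · intro J hJ
    rw [Set.Finite.coe_toFinset]
    exact hkey J hJ
end

section
/- Let S be a numerical semigroup and I ∈ F₀(S). If |I^v \ I| = 1, then I is an atom of G₀(S). -/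
section Aux

lemma natS_frac (S : NumSgp) : IsFracIdeal S (natS S) := by
  refine ⟨⟨0, ⟨0, S.zero_mem, rfl⟩⟩, ⟨0, ?_⟩, ?_⟩
  · rintro x ⟨n, hn, rfl⟩; exact Int.natCast_nonneg n
  · rintro _ ⟨m, hm, rfl⟩ _ ⟨n, hn, rfl⟩
    exact ⟨m + n, S.add_mem m hm n hn, by push_cast; ring⟩

lemma frac_transl (S : NumSgp) (I : Set ℤ) (h : IsFracIdeal S I) (a : ℤ) :
    IsFracIdeal S ((fun x => a + x) '' I) := by
  obtain ⟨⟨x0, hx0⟩, ⟨b, hb⟩, hcl⟩ := h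
  refine ⟨⟨a + x0, ⟨x0, hx0, rfl⟩⟩, ⟨a + b, ?_⟩, ?_⟩
  · rintro _ ⟨x, hx, rfl⟩; exact add_le_add (le_refl a) (hb hx)
  · rintro _ ⟨x, hx, rfl⟩ s hs
    exact ⟨x + s, hcl x hx s hs, by ring⟩

lemma subset_vOp (S : NumSgp) (I : Set ℤ) : I ⊆ vOp S I := by
  intro x hx j hj
  have := hj x hx
  rwa [add_comm]

lemma star_le_v (S : NumSgp) (t : StarOp S) (J : Set ℤ) (hJ : IsFracIdeal S J) :
    t.toFun J ⊆ vOp S J := by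
  intro x hx y hy
  have hJsub : J ⊆ (fun z => (-y) + z) '' natS S := by
    intro j hj
    exact ⟨y + j, hy j hj, by ring⟩
  have h1 : t.toFun J ⊆ t.toFun ((fun z => (-y) + z) '' natS S) :=
    t.mono _ _ hJ (frac_transl S _ (natS_frac S) _) hJsub
  have h2 := t.transl (natS S) (natS_frac S) (-y)
  rw [h2, t.star_S] at h1
  obtain ⟨n, hn, rfl⟩ := h1 hx
  simpa using hn

lemma key_lemma (S : NumSgp) (t : StarOp S) (I : Set ℤ) (hI : IsFracIdeal S I)
    (hcl : t.toFun I ⊆ I) (J : Set ℤ) (hJ : IsFracIdeal S J) :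
    t.toFun J ⊆ starI S I J := by
  intro x hx
  refine ⟨star_le_v S t J hJ hx, ?_⟩
  intro y hy
  have hJsub : J ⊆ (fun z => (-y) + z) '' I := by
    intro j hj
    exact ⟨y + j, hy j hj, by ring⟩
  have h1 : t.toFun J ⊆ t.toFun ((fun z => (-y) + z) '' I) :=
    t.mono _ _ hJ (frac_transl S _ hI _) hJsub
  have h2 := t.transl I hI (-y)
  rw [h2] at h1
  obtain ⟨i, hi, rfl⟩ := h1 hx
  simpa using hcl hi

lemma starI_self (S : NumSgp) (I : Set ℤ) : starI S I I = I := by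
  ext x
  constructor
  · rintro ⟨-, hx2⟩
    have h0 : (0 : ℤ) ∈ idealSub I I := by intro i hi; simpa using hi
    simpa using hx2 0 h0
  · intro hx
    refine ⟨subset_vOp S I hx, ?_⟩
    intro y hy
    have := hy x hx
    rwa [add_comm]

end Aux

/-- If `I ∈ F₀(S)` and `|I^v \ I| = 1`, then `I` is an atom of `G₀(S)`. -/
theorem atom_of_vdiff_singleton (S : NumSgp) (I : Set ℤ) (hI : I ∈ F0 S)
    (h : (vOp S I \ I).ncard = 1) : AtomIdeal S I := by
  obtain ⟨hfrac, hSsub, hNsub⟩ := hI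
  refine ⟨⟨hfrac, hSsub, hNsub⟩, ?_⟩
  intro t u htu
  obtain ⟨a, ha⟩ := Set.ncard_eq_one.mp h
  have hIt : I ⊆ t.toFun I := t.subset_star I hfrac
  have hIu : I ⊆ u.toFun I := u.subset_star I hfrac
  have hna : a ∉ t.toFun I ∨ a ∉ u.toFun I := by
    by_contra hc
    push_neg at hc
    have h1 : a ∈ I := by
      have := htu I hfrac ⟨hc.1, hc.2⟩
      rwa [starI_self] at this
    have h2 : a ∈ vOp S I \ I := by rw [ha]; rfl
    exact h2.2 h1
  have closed : ∀ s : StarOp S, a ∉ s.toFun I → s.toFun I ⊆ I := by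
    intro s hs x hx
    by_contra hxI
    have : x ∈ vOp S I \ I := ⟨star_le_v S s I hfrac hx, hxI⟩
    rw [ha] at this
    exact hs (by rwa [Set.mem_singleton_iff.mp this] at hx)
  rcases hna with hna | hna
  · exact Or.inl (key_lemma S t I hfrac (closed t hna))
  · exact Or.inr (key_lemma S u I hfrac (closed u hna))
end

section
/- Let S be a numerical semigroup. The following are equivalent: (i) every ideal of S in F₀(S) is an atom; (ii) for every fractional ideal I and every ⋆₁, ⋆₂ ∈ Star(S), the ideals I^{⋆₁} and I^{⋆₂} are comparable with respect to inclusion; (iii) the map A : Star(S) → Ant(G₀(S)), ⋆ ↦ A(⋆), is bijective; (iv) the composition A ∘ (Δ ↦ ⋆_Δ) is the identity on Ant(G₀(S)); (v) A(⋆_Δ) = Δ for every antichain Δ of (G₀(S), ≤⋆); (vi) |Star(S)| equals the number of antichains of (G₀(S), ≤⋆). -/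
/-- For a closure function `f`, the set of `≤⋆`-maximal elements of the family of
`f`-closed ideals of `G₀(S)`; applied to the action of a star operation `⋆`, this is `A(⋆)`. -/
def AmapF (S : NumSgp) (f : Set ℤ → Set ℤ) : Set (Set ℤ) :=
  {I | I ∈ G0 S ∧ f I = I ∧ ∀ J ∈ G0 S, f J = J → starle S I J → I = J}

noncomputable section AuxStar
open Classical

namespace AuxNS

/-- translation -/
def tr (a : ℤ) (I : Set ℤ) : Set ℤ := (fun x => a + x) '' I

theorem mem_tr {a x : ℤ} {I : Set ℤ} : x ∈ tr a I ↔ -a + x ∈ I := by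
  constructor
  · rintro ⟨y, hy, rfl⟩; simpa using hy
  · intro h; exact ⟨-a + x, h, by ring⟩

theorem tr_tr (a b : ℤ) (I : Set ℤ) : tr a (tr b I) = tr (a + b) I := by
  ext x; simp only [mem_tr]
  have : -b + (-a + x) = -(a + b) + x := by ring
  rw [this]

theorem tr_zero (I : Set ℤ) : tr 0 I = I := by
  ext x; simp [mem_tr]

theorem tr_mono {I J : Set ℤ} (a : ℤ) (h : I ⊆ J) : tr a I ⊆ tr a J := by
  intro x hx; rw [mem_tr] at *; exact h hx

theorem tr_inter (a : ℤ) (I J : Set ℤ) : tr a (I ∩ J) = tr a I ∩ tr a J := by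
  ext x; simp [mem_tr]

variable {S : NumSgp}

theorem natS_zero : (0 : ℤ) ∈ natS S := ⟨0, S.zero_mem, rfl⟩

theorem natS_add {x y : ℤ} (hx : x ∈ natS S) (hy : y ∈ natS S) : x + y ∈ natS S := by
  obtain ⟨a, ha, rfl⟩ := hx; obtain ⟨b, hb, rfl⟩ := hy
  exact ⟨a + b, S.add_mem a ha b hb, by push_cast; ring⟩

theorem natS_nonneg {x : ℤ} (hx : x ∈ natS S) : 0 ≤ x := by
  obtain ⟨a, _, rfl⟩ := hx; positivity

theorem mem_natS {x : ℤ} : x ∈ natS S ↔ 0 ≤ x ∧ x.toNat ∈ S.carrier := by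
  constructor
  · rintro ⟨a, ha, rfl⟩
    simpa using ha
  · rintro ⟨h0, hc⟩
    exact ⟨x.toNat, hc, Int.toNat_of_nonneg h0⟩

/-- there is a bound above which every integer is in `natS`. -/
theorem natS_bound (S : NumSgp) : ∃ N : ℤ, 0 ≤ N ∧ ∀ x : ℤ, N ≤ x → x ∈ natS S := by
  obtain ⟨B, hB⟩ := S.cofinite.bddAbove
  refine ⟨(B : ℤ) + 1, by positivity, fun x hx => ?_⟩
  have hx0 : (0 : ℤ) ≤ x := le_trans (by positivity) hx
  refine ⟨x.toNat, ?_, Int.toNat_of_nonneg hx0⟩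
  by_contra h
  have := hB h
  omega

theorem frac_natS : IsFracIdeal S (natS S) :=
  ⟨⟨0, natS_zero⟩, ⟨0, fun x hx => natS_nonneg hx⟩, fun i hi s hs => natS_add hi hs⟩

theorem frac_tr {I : Set ℤ} (a : ℤ) (h : IsFracIdeal S I) : IsFracIdeal S (tr a I) := by
  obtain ⟨⟨x, hx⟩, ⟨b, hb⟩, hcl⟩ := h
  refine ⟨⟨a + x, ⟨x, hx, rfl⟩⟩, ⟨a + b, ?_⟩, ?_⟩
  · rintro y hy; rw [mem_tr] at hy; have := hb hy; omega
  · intro i hi s hs; rw [mem_tr] at *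
    have := hcl _ hi s hs; convert this using 1; ring

theorem frac_inter {I J : Set ℤ} (hI : IsFracIdeal S I) (hJ : IsFracIdeal S J)
    (hne : (I ∩ J).Nonempty) : IsFracIdeal S (I ∩ J) := by
  obtain ⟨-, ⟨b, hb⟩, hclI⟩ := hI
  obtain ⟨-, -, hclJ⟩ := hJ
  exact ⟨hne, ⟨b, fun x hx => hb hx.1⟩,
    fun i hi s hs => ⟨hclI i hi.1 s hs, hclJ i hi.2 s hs⟩⟩

/-- minimal element of a fractional ideal -/
theorem frac_min {I : Set ℤ} (h : IsFracIdeal S I) : ∃ m ∈ I, ∀ x ∈ I, m ≤ x := by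
  obtain ⟨hne, ⟨b, hb⟩, -⟩ := h
  obtain ⟨m, hm, hle⟩ := Int.exists_least_of_bdd (P := fun z => z ∈ I) ⟨b, fun z hz => hb hz⟩ hne
  exact ⟨m, hm, hle⟩

/-! ### idealSub basics -/

theorem idealSub_unit (K L : Set ℤ) : L ⊆ idealSub K (idealSub K L) :=
  fun x hx y hy => by have := hy x hx; rwa [add_comm]

theorem idealSub_anti {K L L' : Set ℤ} (h : L ⊆ L') : idealSub K L' ⊆ idealSub K L :=
  fun x hx j hj => hx j (h hj)

theorem idealSub_triple (K L : Set ℤ) :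
    idealSub K (idealSub K (idealSub K L)) = idealSub K L :=
  Set.Subset.antisymm (idealSub_anti (idealSub_unit K L)) (idealSub_unit K (idealSub K L))

theorem idealSub_tr_right (K : Set ℤ) (a : ℤ) (L : Set ℤ) :
    idealSub K (tr a L) = tr (-a) (idealSub K L) := by
  ext x
  constructor
  · intro h
    rw [mem_tr]
    intro j hj
    have := h (a + j) ⟨j, hj, rfl⟩
    convert this using 1; ring
  · intro h j hj
    rw [mem_tr] at h
    obtain ⟨j', hj', rfl⟩ := hj
    have := h j' hj'
    convert this using 1; ring

theorem idealSub_tr_left (K : Set ℤ) (a : ℤ) (L : Set ℤ) :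
    idealSub (tr a K) L = tr a (idealSub K L) := by
  ext x
  constructor
  · intro h
    rw [mem_tr]
    intro j hj
    have := h j hj
    rw [mem_tr] at this
    convert this using 1; ring
  · intro h j hj
    rw [mem_tr] at h ⊢
    have := h j hj
    convert this using 1; ring

/-- double-dual w.r.t. K of something inside K is inside K, provided 0 ∈ idealSub K L -/
theorem idealSub_double_subset {K L : Set ℤ} (h : L ⊆ K) :
    idealSub K (idealSub K L) ⊆ K := by
  intro x hx
  have h0 : (0 : ℤ) ∈ idealSub K L := fun j hj => by simpa using h hj
  simpa using hx 0 h0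

theorem idealSub_double_mono {K L L' : Set ℤ} (h : L ⊆ L') :
    idealSub K (idealSub K L) ⊆ idealSub K (idealSub K L') :=
  idealSub_anti (idealSub_anti h)

/-- frac-ness of `idealSub K L` pieces needs K frac -/
theorem idealSub_add_closed {K L : Set ℤ} (hK : IsFracIdeal S K) {x s : ℤ}
    (hx : x ∈ idealSub K L) (hs : s ∈ natS S) : x + s ∈ idealSub K L := by
  intro j hj
  have := hK.2.2 _ (hx j hj) s hs
  convert this using 1; ring


/-! ### vOp basics -/

theorem subset_vOp (I : Set ℤ) : I ⊆ vOp S I := idealSub_unit _ _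

theorem vOp_mono {I J : Set ℤ} (h : I ⊆ J) : vOp S I ⊆ vOp S J :=
  idealSub_double_mono h

theorem vOp_idem (I : Set ℤ) : vOp S (vOp S I) = vOp S I := by
  unfold vOp
  rw [idealSub_triple]

theorem vOp_tr (a : ℤ) (I : Set ℤ) : vOp S (tr a I) = tr a (vOp S I) := by
  unfold vOp
  rw [idealSub_tr_right, idealSub_tr_right, neg_neg]

theorem vOp_natS : vOp S (natS S) = natS S := by
  refine Set.Subset.antisymm ?_ (subset_vOp _)
  intro x hx
  have h0 : (0 : ℤ) ∈ idealSub (natS S) (natS S) := fun j hj => by simpa using hj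
  simpa using hx 0 h0

theorem vOp_add_closed {I : Set ℤ} {x s : ℤ} (hx : x ∈ vOp S I) (hs : s ∈ natS S) :
    x + s ∈ vOp S I :=
  idealSub_add_closed frac_natS hx hs

/-- `idealSub (natS S) I` is nonempty for fractional `I`. -/
theorem idealSub_natS_nonempty {I : Set ℤ} (hI : IsFracIdeal S I) :
    (idealSub (natS S) I).Nonempty := by
  obtain ⟨m, hm, hmin⟩ := frac_min hI
  obtain ⟨N, hN0, hN⟩ := natS_bound S
  refine ⟨N - m, fun j hj => ?_⟩
  have := hmin j hj
  exact hN _ (by omega)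

theorem frac_vOp {I : Set ℤ} (hI : IsFracIdeal S I) : IsFracIdeal S (vOp S I) := by
  obtain ⟨y, hy⟩ := idealSub_natS_nonempty hI
  refine ⟨hI.1.mono (subset_vOp I), ⟨-y, fun x hx => ?_⟩, fun i hi s hs => vOp_add_closed hi hs⟩
  have := natS_nonneg (hx y hy)
  omega

theorem vOp_subset_nonneg {I : Set ℤ} (hI0 : (0:ℤ) ∈ I) (hIn : I ⊆ {x : ℤ | 0 ≤ x}) :
    vOp S I ⊆ {x : ℤ | 0 ≤ x} := by
  intro x hx
  simp only [Set.mem_setOf_eq]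
  by_contra hneg
  push_neg at hneg
  -- find y with y + I ⊆ natS S and x + y ∉ natS S
  rcases Set.eq_empty_or_nonempty S.carrierᶜ with hc | hc
  · -- no gaps: y = -x-1 works
    have hy : -x - 1 ∈ idealSub (natS S) I := by
      intro j hj
      have hj0 : 0 ≤ j := hIn hj
      rw [mem_natS]
      refine ⟨by omega, ?_⟩
      have : S.carrier = Set.univ := by
        rw [← Set.compl_empty_iff]; exact hc
      rw [this]; trivial
    have := natS_nonneg (hx _ hy)
    omega
  · -- gaps: F := max gap; y := F - x
    obtain ⟨F, hF, hFmax⟩ := Set.Finite.exists_maximalFor id _ S.cofinite hc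
    have hFnot : F ∉ S.carrier := hF
    have hFtop : ∀ n : ℕ, F < n → n ∈ S.carrier := by
      intro n hn
      by_contra hns
      have := hFmax (j := n) hns (le_of_lt hn)
      simp only [id] at this; omega
    have hy : (F : ℤ) - x ∈ idealSub (natS S) I := by
      intro j hj
      have hj0 : 0 ≤ j := hIn hj
      rw [mem_natS]
      exact ⟨by omega, hFtop _ (by omega)⟩
    have hmem : (F : ℤ) ∈ natS S := by
      have := hx _ hy
      have he : x + ((F:ℤ) - x) = (F:ℤ) := by ring
      rwa [he] at this
    rw [mem_natS] at hmem
    exact hFnot (by simpa using hmem.2)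

/-! ### F0 / G0 basics -/

theorem F0_frac {I : Set ℤ} (h : I ∈ F0 S) : IsFracIdeal S I := h.1

theorem F0_zero_mem {I : Set ℤ} (h : I ∈ F0 S) : (0:ℤ) ∈ I := h.2.1 natS_zero

theorem vOp_F0_nonneg {I : Set ℤ} (h : I ∈ F0 S) : vOp S I ⊆ {x : ℤ | 0 ≤ x} :=
  vOp_subset_nonneg (F0_zero_mem h) h.2.2

theorem G0_frac {I : Set ℤ} (h : I ∈ G0 S) : IsFracIdeal S I := h.1.1

/-- translating a fractional ideal by minus its minimum lands in F0 -/
theorem frac_tr_F0 {I : Set ℤ} (hI : IsFracIdeal S I) :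
    ∃ m : ℤ, tr (-m) I ∈ F0 S ∧ I = tr m (tr (-m) I) := by
  obtain ⟨m, hm, hmin⟩ := frac_min hI
  refine ⟨m, ⟨frac_tr _ hI, ?_, ?_⟩, by rw [tr_tr]; simp [tr_zero]⟩
  · intro x hx
    rw [mem_tr]
    have : m + x ∈ I := by
      have := hI.2.2 m hm x hx
      simpa [add_comm] using this
    simpa using this
  · intro x hx
    rw [mem_tr] at hx
    have := hmin _ hx
    simp only [Set.mem_setOf_eq]
    omega

/-- gaps of S inside ℤ -/
def gapsZ (S : NumSgp) : Set ℤ := {x : ℤ | 0 ≤ x ∧ x ∉ natS S}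

theorem gapsZ_finite : (gapsZ S).Finite := by
  have : gapsZ S ⊆ (fun n : ℕ => (n:ℤ)) '' S.carrierᶜ := by
    rintro x ⟨hx0, hxn⟩
    refine ⟨x.toNat, ?_, Int.toNat_of_nonneg hx0⟩
    intro hc
    exact hxn ⟨x.toNat, hc, Int.toNat_of_nonneg hx0⟩
  exact Set.Finite.subset (S.cofinite.image _) this

theorem F0_finite : (F0 S).Finite := by
  have : F0 S ⊆ (fun T => natS S ∪ T) '' {T | T ⊆ gapsZ S} := by
    intro I hI
    refine ⟨I \ natS S, fun x hx => ⟨hI.2.2 hx.1, hx.2⟩, ?_⟩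
    apply Set.Subset.antisymm
    · rintro x (hx | hx)
      · exact hI.2.1 hx
      · exact hx.1
    · intro x hx
      by_cases h : x ∈ natS S
      · exact Or.inl h
      · exact Or.inr ⟨hx, h⟩
  exact Set.Finite.subset ((Set.Finite.finite_subsets gapsZ_finite).image _) this

theorem G0_finite : (G0 S).Finite := F0_finite.subset fun I hI => hI.1

/-- the set `vOp S I \ I` is finite and nonempty for `I ∈ G0`, and has a max -/
theorem vdiff_max {I : Set ℤ} (hI : I ∈ G0 S) :
    ∃ a, a ∈ vOp S I \ I ∧ ∀ b ∈ vOp S I \ I, b ≤ a := by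
  have hfin : (vOp S I \ I).Finite := by
    apply Set.Finite.subset gapsZ_finite
    rintro x ⟨hxv, hxI⟩
    exact ⟨vOp_F0_nonneg hI.1 hxv, fun hs => hxI (hI.1.2.1 hs)⟩
  have hne : (vOp S I \ I).Nonempty := by
    rw [Set.diff_nonempty]
    intro hsub
    exact hI.2 (Set.Subset.antisymm hsub (subset_vOp I))
  obtain ⟨a, ha, hmax⟩ := Set.Finite.exists_maximalFor id _ hfin hne
  refine ⟨a, ha, fun b hb => ?_⟩
  by_contra h
  have := hmax (j := b) hb (by simp only [id]; omega)
  simp only [id] at this; omega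

/-! ### starD basics -/

theorem mem_starD {Δ : Set (Set ℤ)} {J x : Set ℤ → Set ℤ → Prop} : True := trivial

theorem mem_starD_iff {Δ : Set (Set ℤ)} {J : Set ℤ} {x : ℤ} :
    x ∈ starD S Δ J ↔ x ∈ vOp S J ∧ ∀ K ∈ Δ, x ∈ idealSub K (idealSub K J) := by
  simp [starD]

theorem starD_subset_vOp (Δ : Set (Set ℤ)) (J : Set ℤ) : starD S Δ J ⊆ vOp S J :=
  Set.inter_subset_left

theorem subset_starI (K J : Set ℤ) : J ⊆ starI S K J :=
  fun x hx => ⟨subset_vOp J hx, idealSub_unit K J hx⟩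

theorem subset_starD (Δ : Set (Set ℤ)) (J : Set ℤ) : J ⊆ starD S Δ J := by
  intro x hx
  rw [mem_starD_iff]
  exact ⟨subset_vOp J hx, fun K _ => idealSub_unit K J hx⟩

theorem starD_mono (Δ : Set (Set ℤ)) {J J' : Set ℤ} (h : J ⊆ J') :
    starD S Δ J ⊆ starD S Δ J' := by
  intro x hx
  rw [mem_starD_iff] at *
  exact ⟨vOp_mono h hx.1, fun K hK => idealSub_double_mono h (hx.2 K hK)⟩

theorem starD_anti {Δ Γ : Set (Set ℤ)} (h : Γ ⊆ Δ) (J : Set ℤ) :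
    starD S Δ J ⊆ starD S Γ J := by
  intro x hx
  rw [mem_starD_iff] at *
  exact ⟨hx.1, fun K hK => hx.2 K (h hK)⟩

theorem starD_tr (Δ : Set (Set ℤ)) (a : ℤ) (J : Set ℤ) :
    starD S Δ (tr a J) = tr a (starD S Δ J) := by
  ext x
  rw [mem_tr, mem_starD_iff, mem_starD_iff]
  have hv : x ∈ vOp S (tr a J) ↔ -a + x ∈ vOp S J := by
    rw [vOp_tr, mem_tr]
  have hk : ∀ K : Set ℤ, x ∈ idealSub K (idealSub K (tr a J)) ↔
      -a + x ∈ idealSub K (idealSub K J) := by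
    intro K
    rw [idealSub_tr_right, idealSub_tr_right, neg_neg, mem_tr]
  constructor
  · rintro ⟨h1, h2⟩
    exact ⟨hv.mp h1, fun K hK => (hk K).mp (h2 K hK)⟩
  · rintro ⟨h1, h2⟩
    exact ⟨hv.mpr h1, fun K hK => (hk K).mpr (h2 K hK)⟩

theorem starD_natS (Δ : Set (Set ℤ)) : starD S Δ (natS S) = natS S := by
  apply Set.Subset.antisymm
  · intro x hx
    have := (mem_starD_iff.mp hx).1
    rwa [vOp_natS] at this
  · exact subset_starD Δ _

theorem starD_mem_self {Δ : Set (Set ℤ)} {I : Set ℤ} (hI : I ∈ Δ) :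
    starD S Δ I = I := by
  apply Set.Subset.antisymm
  · intro x hx
    rw [mem_starD_iff] at hx
    exact idealSub_double_subset (le_refl I) (hx.2 I hI)
  · exact subset_starD Δ I

theorem starD_singleton (K J : Set ℤ) : starD S {K} J = starI S K J := by
  ext x
  rw [mem_starD_iff]
  simp [starI]

theorem starD_insert (K : Set ℤ) (Γ : Set (Set ℤ)) (J : Set ℤ) :
    starD S (insert K Γ) J = starI S K J ∩ starD S Γ J := by
  ext x
  rw [mem_starD_iff]
  simp only [Set.mem_inter_iff, mem_starD_iff, starI, Set.mem_insert_iff]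
  constructor
  · rintro ⟨h1, h2⟩
    exact ⟨⟨h1, h2 K (Or.inl rfl)⟩, h1, fun K' hK' => h2 K' (Or.inr hK')⟩
  · rintro ⟨⟨h1, h2⟩, -, h3⟩
    refine ⟨h1, fun K' hK' => ?_⟩
    rcases hK' with rfl | hK'
    · exact h2
    · exact h3 K' hK'

theorem starD_union (Δ Γ : Set (Set ℤ)) (J : Set ℤ) :
    starD S (Δ ∪ Γ) J = starD S Δ J ∩ starD S Γ J := by
  ext x
  simp only [Set.mem_inter_iff, mem_starD_iff, Set.mem_union]
  constructor
  · rintro ⟨h1, h2⟩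
    exact ⟨⟨h1, fun K hK => h2 K (Or.inl hK)⟩, h1, fun K hK => h2 K (Or.inr hK)⟩
  · rintro ⟨⟨h1, h2⟩, -, h3⟩
    exact ⟨h1, fun K hK => hK.elim (h2 K) (h3 K)⟩

theorem starD_idem (Δ : Set (Set ℤ)) (J : Set ℤ) :
    starD S Δ (starD S Δ J) = starD S Δ J := by
  apply Set.Subset.antisymm
  · intro x hx
    rw [mem_starD_iff] at hx
    rw [mem_starD_iff]
    constructor
    · have h1 : vOp S (starD S Δ J) ⊆ vOp S J := by
        have := vOp_mono (S := S) (starD_subset_vOp (S := S) Δ J)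
        rwa [vOp_idem] at this
      exact h1 hx.1
    · intro K hK
      have h2 : idealSub K (idealSub K (starD S Δ J)) ⊆ idealSub K (idealSub K J) := by
        have hsub : starD S Δ J ⊆ idealSub K (idealSub K J) := by
          intro y hy
          exact (mem_starD_iff.mp hy).2 K hK
        have := idealSub_double_mono (K := K) hsub
        rwa [idealSub_triple] at this
      exact h2 (hx.2 K hK)
  · exact subset_starD Δ _

theorem frac_starD {Δ : Set (Set ℤ)} (hΔ : ∀ K ∈ Δ, IsFracIdeal S K) {J : Set ℤ}
    (hJ : IsFracIdeal S J) : IsFracIdeal S (starD S Δ J) := by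
  refine ⟨hJ.1.mono (subset_starD Δ J), (frac_vOp hJ).2.1.mono (starD_subset_vOp Δ J), ?_⟩
  intro i hi s hs
  rw [mem_starD_iff] at hi ⊢
  exact ⟨vOp_add_closed hi.1 hs, fun K hK => idealSub_add_closed (hΔ K hK) (hi.2 K hK) hs⟩

/-- the normalized action of `⋆_Δ` -/
def starDfun (S : NumSgp) (Δ : Set (Set ℤ)) : Set ℤ → Set ℤ :=
  fun J => if IsFracIdeal S J then starD S Δ J else J

theorem starDfun_pos (Δ : Set (Set ℤ)) {J : Set ℤ} (hJ : IsFracIdeal S J) :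
    starDfun S Δ J = starD S Δ J := if_pos hJ

/-- The star operation generated by a set of fractional ideals. -/
def mkStarD (Δ : Set (Set ℤ)) (hΔ : ∀ K ∈ Δ, IsFracIdeal S K) : StarOp S where
  toFun := starDfun S Δ
  isFrac J hJ := by rw [starDfun_pos Δ hJ]; exact frac_starD hΔ hJ
  subset_star J hJ := by rw [starDfun_pos Δ hJ]; exact subset_starD Δ J
  mono I J hI hJ hIJ := by
    rw [starDfun_pos Δ hI, starDfun_pos Δ hJ]; exact starD_mono Δ hIJ
  idem I hI := by
    rw [starDfun_pos Δ hI, starDfun_pos Δ (frac_starD hΔ hI), starD_idem]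
  transl I hI a := by
    show starDfun S Δ (tr a I) = tr a (starDfun S Δ I)
    rw [starDfun_pos Δ hI, starDfun_pos Δ (frac_tr a hI : IsFracIdeal S (tr a I))]
    exact starD_tr Δ a I
  star_S := by rw [starDfun_pos Δ (frac_natS (S := S)), starD_natS]
  default_eq I hI := if_neg hI

theorem mkStarD_apply {Δ : Set (Set ℤ)} (hΔ : ∀ K ∈ Δ, IsFracIdeal S K) {J : Set ℤ}
    (hJ : IsFracIdeal S J) : (mkStarD Δ hΔ).toFun J = starD S Δ J := if_pos hJ

/-! ### core lemmas about star operations -/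

/-- every star operation is below the `v`-operation -/
theorem star_le_vOp (s : StarOp S) {J : Set ℤ} (hJ : IsFracIdeal S J) :
    s.toFun J ⊆ vOp S J := by
  intro x hx y hy
  have hsub : J ⊆ tr (-y) (natS S) := by
    intro j hj
    rw [mem_tr, neg_neg]
    exact hy j hj
  have htr : s.toFun (tr (-y) (natS S)) = tr (-y) (natS S) := by
    have h := s.transl (natS S) frac_natS (-y)
    rw [s.star_S] at h
    exact h
  have hmono := s.mono J _ hJ (frac_tr _ frac_natS) hsub
  rw [htr] at hmono
  have hx' := mem_tr.mp (hmono hx)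
  rw [neg_neg] at hx'
  rwa [add_comm]

theorem star_closed_of_div (s : StarOp S) {J : Set ℤ} (hJ : IsFracIdeal S J)
    (hdiv : vOp S J = J) : s.toFun J = J :=
  Set.Subset.antisymm (le_trans (star_le_vOp s hJ) (le_of_eq hdiv)) (s.subset_star J hJ)

/-- if `K` is `s`-closed then `s ≤ ⋆_K` -/
theorem star_le_starI (s : StarOp S) {K : Set ℤ} (hK : IsFracIdeal S K)
    (hcl : s.toFun K = K) {J : Set ℤ} (hJ : IsFracIdeal S J) :
    s.toFun J ⊆ starI S K J := by
  intro x hx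
  refine ⟨star_le_vOp s hJ hx, ?_⟩
  intro y hy
  have hsub : J ⊆ tr (-y) K := by
    intro j hj
    rw [mem_tr, neg_neg]
    exact hy j hj
  have htr : s.toFun (tr (-y) K) = tr (-y) K := by
    have h := s.transl K hK (-y)
    rw [hcl] at h
    exact h
  have hmono := s.mono J _ hJ (frac_tr _ hK) hsub
  rw [htr] at hmono
  have hx' := mem_tr.mp (hmono hx)
  rw [neg_neg] at hx'
  rwa [add_comm]

theorem starI_self (I : Set ℤ) : starI S I I = I := by
  apply Set.Subset.antisymm
  · rintro x ⟨-, hd⟩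
    exact idealSub_double_subset (le_refl I) hd
  · exact subset_starI I I

theorem starle_refl (I : Set ℤ) : starle S I I := starI_self I

theorem frac_of_singleton {K : Set ℤ} (hK : IsFracIdeal S K) :
    ∀ L ∈ ({K} : Set (Set ℤ)), IsFracIdeal S L := by
  rintro L rfl
  exact hK

/-- `J ≤⋆ K` implies `⋆_K ≤ ⋆_J` -/
theorem starle_le_starI {J K : Set ℤ} (hJ : IsFracIdeal S J) (hK : IsFracIdeal S K)
    (h : starle S J K) {L : Set ℤ} (hL : IsFracIdeal S L) :
    starI S K L ⊆ starI S J L := by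
  set s := mkStarD {K} (frac_of_singleton hK) with hs
  have hcl : s.toFun J = J := by
    rw [hs, mkStarD_apply _ hJ, starD_singleton]
    exact h
  have hle := star_le_starI s hJ hcl hL
  rwa [hs, mkStarD_apply _ hL, starD_singleton] at hle

theorem starle_trans {I J K : Set ℤ} (hI : IsFracIdeal S I) (hJ : IsFracIdeal S J)
    (hK : IsFracIdeal S K) (h1 : starle S I J) (h2 : starle S J K) : starle S I K := by
  have hle := starle_le_starI hJ hK h2 hI
  exact Set.Subset.antisymm (le_trans hle (le_of_eq h1)) (subset_starI K I)

/-- extraction of a witness from non-closedness -/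
theorem starle_wit {I J : Set ℤ} (hI0 : (0:ℤ) ∈ I) (hJn : J ⊆ {x : ℤ | 0 ≤ x})
    (h1 : starle S I J) {a : ℤ} (hav : a ∈ vOp S I) (haI : a ∉ I) :
    ∃ y, 0 ≤ y ∧ (∀ j ∈ I, y + j ∈ J) ∧ a + y ∈ vOp S J ∧ a + y ∉ J := by
  have ha' : a ∉ idealSub J (idealSub J I) := by
    intro hmem
    exact haI (by rw [← h1]; exact ⟨hav, hmem⟩)
  obtain ⟨y, hyJI, hy⟩ : ∃ y ∈ idealSub J I, a + y ∉ J := by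
    by_contra hc
    push_neg at hc
    exact ha' fun y hy => hc y hy
  have hy0 : 0 ≤ y := by
    have hyJ : y ∈ J := by simpa using hyJI 0 hI0
    exact hJn hyJ
  refine ⟨y, hy0, hyJI, ?_, hy⟩
  intro z hz
  have hz' : z + y ∈ idealSub (natS S) I := by
    intro i hi
    have h := hz _ (hyJI i hi)
    have he : z + (y + i) = z + y + i := by ring
    rwa [he] at h
  have h := hav _ hz'
  have he : a + (z + y) = a + y + z := by ring
  rwa [he] at h

theorem starle_antisymm {I J : Set ℤ} (hI : I ∈ G0 S) (hJ : J ∈ G0 S)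
    (h1 : starle S I J) (h2 : starle S J I) : I = J := by
  obtain ⟨a, ⟨hav, haI⟩, hamax⟩ := vdiff_max hI
  obtain ⟨b, ⟨hbv, hbJ⟩, hbmax⟩ := vdiff_max hJ
  obtain ⟨y, hy0, hyIJ, hyv, hynJ⟩ :=
    starle_wit (F0_zero_mem hI.1) hJ.1.2.2 h1 hav haI
  obtain ⟨x, hx0, hxJI, hxv, hxnI⟩ :=
    starle_wit (F0_zero_mem hJ.1) hI.1.2.2 h2 hbv hbJ
  have hab : a + y ≤ b := hbmax _ ⟨hyv, hynJ⟩
  have hba : b + x ≤ a := hamax _ ⟨hxv, hxnI⟩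
  have hy' : y = 0 := by omega
  have hx' : x = 0 := by omega
  apply Set.Subset.antisymm
  · intro i hi
    have := hyIJ i hi
    rwa [hy', zero_add] at this
  · intro j hj
    have := hxJI j hj
    rwa [hx', zero_add] at this

/-! ### maximal elements -/

theorem exists_max_above (n : ℕ) (Θ : Set (Set ℤ)) (hsub : Θ ⊆ G0 S)
    (hcard : Θ.ncard ≤ n) (J : Set ℤ) (hJ : J ∈ Θ) :
    ∃ K ∈ Θ, starle S J K ∧ ∀ K' ∈ Θ, starle S K K' → K = K' := by
  induction n generalizing Θ J with
  | zero =>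
    have hfin : Θ.Finite := G0_finite.subset hsub
    rw [Nat.le_zero, Set.ncard_eq_zero hfin] at hcard
    rw [hcard] at hJ
    exact absurd hJ (Set.notMem_empty J)
  | succ n ih =>
    have hfin : Θ.Finite := G0_finite.subset hsub
    set U := {K ∈ Θ | starle S J K ∧ K ≠ J} with hU
    rcases Set.eq_empty_or_nonempty U with hUe | ⟨K₀, hK₀⟩
    · refine ⟨J, hJ, starle_refl J, fun K' hK' hle => ?_⟩
      by_contra hne
      have : K' ∈ U := ⟨hK', hle, fun h => hne h.symm⟩
      rw [hUe] at this
      exact this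
    · have hUsub : U ⊆ Θ := fun K hK => hK.1
      have hJU : J ∉ U := fun h => h.2.2 rfl
      have hss : U ⊂ Θ := ⟨hUsub, fun h => hJU (h hJ)⟩
      have hcard' : U.ncard ≤ n := by
        have := Set.ncard_lt_ncard hss hfin
        omega
      obtain ⟨K, hKU, hK0K, hmax⟩ := ih U (hUsub.trans hsub) hcard' K₀ hK₀
      have hfr : ∀ L ∈ Θ, IsFracIdeal S L := fun L hL => G0_frac (hsub hL)
      have hJK : starle S J K :=
        starle_trans (hfr J hJ) (hfr K₀ (hUsub hK₀)) (hfr K hKU.1) hK₀.2.1 hK0K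
      refine ⟨K, hKU.1, hJK, fun K' hK' hle => ?_⟩
      by_cases hKJ : K' = J
      · subst hKJ
        exact starle_antisymm (hsub hKU.1) (hsub hK') hle hJK
      · have hK'U : K' ∈ U :=
          ⟨hK', starle_trans (hfr J hJ) (hfr K hKU.1) (hfr K' hK') hJK hle, hKJ⟩
        exact hmax K' hK'U hle

/-! ### properties of AmapF -/

theorem AmapF_sub (f : Set ℤ → Set ℤ) : AmapF S f ⊆ G0 S := fun _ hI => hI.1

theorem AmapF_antichain (f : Set ℤ → Set ℤ) : IsAntichain (starle S) (AmapF S f) :=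
  fun I hI J hJ hne h => hne (hI.2.2 J hJ.1 hJ.2.1 h)

theorem AmapF_congr {f g : Set ℤ → Set ℤ} (h : ∀ I ∈ G0 S, f I = g I) :
    AmapF S f = AmapF S g := by
  ext I
  simp only [AmapF, Set.mem_setOf_eq]
  constructor
  · rintro ⟨hG, hcl, hmax⟩
    exact ⟨hG, (h I hG).symm.trans hcl, fun J hJ hgJ hsl =>
      hmax J hJ ((h J hJ).trans hgJ) hsl⟩
  · rintro ⟨hG, hcl, hmax⟩
    exact ⟨hG, (h I hG).trans hcl, fun J hJ hfJ hsl =>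
      hmax J hJ ((h J hJ).symm.trans hfJ) hsl⟩

theorem exists_Amap_above (s : StarOp S) {J : Set ℤ} (hJ : J ∈ G0 S)
    (hcl : s.toFun J = J) : ∃ K ∈ AmapF S s.toFun, starle S J K := by
  set Θ := {K | K ∈ G0 S ∧ s.toFun K = K} with hΘ
  have hsub : Θ ⊆ G0 S := fun K hK => hK.1
  obtain ⟨K, hKΘ, hJK, hmax⟩ :=
    exists_max_above Θ.ncard Θ hsub (le_refl _) J ⟨hJ, hcl⟩
  exact ⟨K, ⟨hKΘ.1, hKΘ.2, fun J' hJ' hcl' hsl => hmax J' ⟨hJ', hcl'⟩ hsl⟩, hJK⟩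

/-- F0-ness of the star image of an F0 ideal -/
theorem star_F0 (s : StarOp S) {J : Set ℤ} (hJ : J ∈ F0 S) : s.toFun J ∈ F0 S := by
  refine ⟨s.isFrac J hJ.1, le_trans hJ.2.1 (s.subset_star J hJ.1), ?_⟩
  intro x hx
  exact vOp_F0_nonneg hJ (star_le_vOp s hJ.1 hx)

/-- structure theorem: every star operation is `⋆_{A(⋆)}` -/
theorem star_eq_starD_A (s : StarOp S) {J : Set ℤ} (hJ : IsFracIdeal S J) :
    s.toFun J = starD S (AmapF S s.toFun) J := by
  set A := AmapF S s.toFun with hA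
  apply Set.Subset.antisymm
  · intro x hx
    rw [mem_starD_iff]
    refine ⟨star_le_vOp s hJ hx, fun K hK => ?_⟩
    exact (star_le_starI s (G0_frac hK.1) hK.2.1 hJ hx).2
  · obtain ⟨m, hJ₀, hrepr⟩ := frac_tr_F0 hJ
    set J₀ := tr (-m) J with hJ₀def
    have hJ₀f : IsFracIdeal S J₀ := F0_frac hJ₀
    set L := s.toFun J₀ with hLdef
    have hLF0 : L ∈ F0 S := star_F0 s hJ₀
    have hLcl : s.toFun L = L := s.idem J₀ hJ₀f
    have hdL : starD S A L ⊆ L := by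
      by_cases hdiv : Divisorial S L
      · intro x hx
        rw [← hdiv]
        exact starD_subset_vOp (S := S) A L hx
      · have hLG0 : L ∈ G0 S := ⟨hLF0, hdiv⟩
        obtain ⟨K, hKA, hLK⟩ := exists_Amap_above s hLG0 hLcl
        intro x hx
        rw [mem_starD_iff] at hx
        rw [← hLK]
        exact ⟨hx.1, hx.2 K hKA⟩
    have key : starD S A J₀ ⊆ s.toFun J₀ := by
      intro x hx
      exact hdL (starD_mono A (s.subset_star J₀ hJ₀f) hx)
    calc starD S A J = starD S A (tr m J₀) := by rw [← hrepr]
      _ = tr m (starD S A J₀) := starD_tr A m J₀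
      _ ⊆ tr m (s.toFun J₀) := tr_mono m key
      _ = s.toFun (tr m J₀) := (s.transl J₀ hJ₀f m).symm
      _ = s.toFun J := by rw [← hrepr]

theorem StarOp.ext' {s t : StarOp S} (h : s.toFun = t.toFun) : s = t := by
  cases s; cases t; cases h; rfl

theorem Amap_inj : Function.Injective (fun s : StarOp S => AmapF S s.toFun) := by
  intro s t h
  simp only at h
  apply StarOp.ext'
  funext J
  by_cases hJ : IsFracIdeal S J
  · rw [star_eq_starD_A s hJ, star_eq_starD_A t hJ, h]
  · rw [s.default_eq J hJ, t.default_eq J hJ]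

theorem AmapF_mkStarD {Δ : Set (Set ℤ)} (hΔ : ∀ K ∈ Δ, IsFracIdeal S K) :
    AmapF S (mkStarD Δ hΔ).toFun = AmapF S (starD S Δ) :=
  AmapF_congr fun I hI => starDfun_pos Δ (G0_frac hI)

/-! ### the implications -/

theorem imp21
    (h2 : ∀ I, IsFracIdeal S I → ∀ t u : StarOp S,
      t.toFun I ⊆ u.toFun I ∨ u.toFun I ⊆ t.toFun I) :
    ∀ I ∈ F0 S, AtomIdeal S I := by
  intro I hI
  refine ⟨hI, fun t u hyp => ?_⟩
  have hIf := F0_frac hI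
  have hII := hyp I hIf
  rw [starI_self] at hII
  rcases h2 I hIf t u with hc | hc
  · left
    have htI : t.toFun I = I :=
      Set.Subset.antisymm (fun x hx => hII ⟨hx, hc hx⟩) (t.subset_star I hIf)
    exact fun J hJ => star_le_starI t hIf htI hJ
  · right
    have huI : u.toFun I = I :=
      Set.Subset.antisymm (fun x hx => hII ⟨hc hx, hx⟩) (u.subset_star I hIf)
    exact fun J hJ => star_le_starI u hIf huI hJ

theorem imp12 (h1 : ∀ I ∈ F0 S, AtomIdeal S I) :
    ∀ I, IsFracIdeal S I → ∀ t u : StarOp S,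
      t.toFun I ⊆ u.toFun I ∨ u.toFun I ⊆ t.toFun I := by
  intro I hIf t u
  obtain ⟨m, hI₀, hrepr⟩ := frac_tr_F0 hIf
  set I₀ := tr (-m) I with hI₀def
  have hI₀f : IsFracIdeal S I₀ := F0_frac hI₀
  set K := t.toFun I₀ ∩ u.toFun I₀ with hKdef
  have hKsub : I₀ ⊆ K :=
    Set.subset_inter (t.subset_star I₀ hI₀f) (u.subset_star I₀ hI₀f)
  have hKfrac : IsFracIdeal S K :=
    frac_inter (t.isFrac I₀ hI₀f) (u.isFrac I₀ hI₀f) (hI₀f.1.mono hKsub)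
  have hKF0 : K ∈ F0 S :=
    ⟨hKfrac, le_trans hI₀.2.1 hKsub, fun x hx => (star_F0 t hI₀).2.2 hx.1⟩
  have hKt : t.toFun K ⊆ t.toFun I₀ := by
    have := t.mono K (t.toFun I₀) hKfrac (t.isFrac I₀ hI₀f) Set.inter_subset_left
    rwa [t.idem I₀ hI₀f] at this
  have hKu : u.toFun K ⊆ u.toFun I₀ := by
    have := u.mono K (u.toFun I₀) hKfrac (u.isFrac I₀ hI₀f) Set.inter_subset_right
    rwa [u.idem I₀ hI₀f] at this
  have hyp : ∀ J, IsFracIdeal S J → t.toFun J ∩ u.toFun J ⊆ starI S K J := by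
    intro J hJ x hx
    refine ⟨star_le_vOp t hJ hx.1, ?_⟩
    intro y hy
    have hsub : J ⊆ tr (-y) K := by
      intro j hj
      rw [mem_tr, neg_neg]
      exact hy j hj
    have hfrK : IsFracIdeal S (tr (-y) K) := frac_tr _ hKfrac
    have hxt : x ∈ tr (-y) (t.toFun K) := by
      have h := t.mono J _ hJ hfrK hsub
      have h2 : t.toFun (tr (-y) K) = tr (-y) (t.toFun K) := t.transl K hKfrac (-y)
      rw [h2] at h
      exact h hx.1
    have hxu : x ∈ tr (-y) (u.toFun K) := by
      have h := u.mono J _ hJ hfrK hsub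
      have h2 : u.toFun (tr (-y) K) = tr (-y) (u.toFun K) := u.transl K hKfrac (-y)
      rw [h2] at h
      exact h hx.2
    rw [mem_tr, neg_neg] at hxt hxu
    have : y + x ∈ K := ⟨hKt hxt, hKu hxu⟩
    rwa [add_comm] at this
  have hKK : starI S K I₀ ⊆ K := fun x hx => idealSub_double_subset hKsub hx.2
  rcases (h1 K hKF0).2 t u hyp with h | h
  · left
    have hsub₀ : t.toFun I₀ ⊆ u.toFun I₀ :=
      le_trans (le_trans (h I₀ hI₀f) hKK) Set.inter_subset_right
    calc t.toFun I = t.toFun (tr m I₀) := by rw [← hrepr]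
      _ = tr m (t.toFun I₀) := t.transl I₀ hI₀f m
      _ ⊆ tr m (u.toFun I₀) := tr_mono m hsub₀
      _ = u.toFun (tr m I₀) := (u.transl I₀ hI₀f m).symm
      _ = u.toFun I := by rw [← hrepr]
  · right
    have hsub₀ : u.toFun I₀ ⊆ t.toFun I₀ :=
      le_trans (le_trans (h I₀ hI₀f) hKK) Set.inter_subset_left
    calc u.toFun I = u.toFun (tr m I₀) := by rw [← hrepr]
      _ = tr m (u.toFun I₀) := u.transl I₀ hI₀f m
      _ ⊆ tr m (t.toFun I₀) := tr_mono m hsub₀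
      _ = t.toFun (tr m I₀) := (t.transl I₀ hI₀f m).symm
      _ = t.toFun I := by rw [← hrepr]

theorem starD_empty (J : Set ℤ) : starD S ∅ J = vOp S J := by
  ext x
  rw [mem_starD_iff]
  simp

/-- primality decomposition from (i) -/
theorem starD_le_prime (h1 : ∀ I ∈ F0 S, AtomIdeal S I) (Θ : Set (Set ℤ))
    (hfin : Θ.Finite) :
    Θ ⊆ G0 S → ∀ J ∈ G0 S,
      (∀ L, IsFracIdeal S L → starD S Θ L ⊆ starI S J L) →
      ∃ K ∈ Θ, ∀ L, IsFracIdeal S L → starI S K L ⊆ starI S J L := by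
  refine Set.Finite.induction_on
    (motive := fun Θ _ => Θ ⊆ G0 S → ∀ J ∈ G0 S,
      (∀ L, IsFracIdeal S L → starD S Θ L ⊆ starI S J L) →
      ∃ K ∈ Θ, ∀ L, IsFracIdeal S L → starI S K L ⊆ starI S J L)
    Θ hfin ?_ ?_
  · intro _ J hJG hhyp
    exfalso
    have := hhyp J (G0_frac hJG)
    rw [starD_empty, starI_self] at this
    exact hJG.2 (Set.Subset.antisymm this (subset_vOp J))
  · intro a Γ hane hfinΓ ihΓ hsub J hJG hhyp
    have haG0 : a ∈ G0 S := hsub (Set.mem_insert a Γ)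
    have hΓsub : Γ ⊆ G0 S := fun K hK => hsub (Set.mem_insert_of_mem a hK)
    rcases Set.eq_empty_or_nonempty Γ with rfl | hΓne
    · refine ⟨a, Set.mem_insert a ∅, fun L hL x hx => ?_⟩
      apply hhyp L hL
      have : starD S (insert a ∅) L = starI S a L ∩ starD S ∅ L := starD_insert a ∅ L
      rw [this, starD_empty]
      exact ⟨hx, hx.1⟩
    · set t := mkStarD {a} (frac_of_singleton (G0_frac haG0)) with ht
      set u := mkStarD Γ (fun K hK => G0_frac (hΓsub hK)) with hu
      have hyp' : ∀ L, IsFracIdeal S L → t.toFun L ∩ u.toFun L ⊆ starI S J L := by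
        intro L hL
        rw [ht, hu, mkStarD_apply _ hL, mkStarD_apply _ hL, starD_singleton]
        intro x hx
        apply hhyp L hL
        rw [starD_insert]
        exact hx
      rcases (h1 J hJG.1).2 t u hyp' with h | h
      · refine ⟨a, Set.mem_insert a Γ, fun L hL => ?_⟩
        have := h L hL
        rwa [ht, mkStarD_apply _ hL, starD_singleton] at this
      · obtain ⟨K, hKΓ, hK⟩ := ihΓ hΓsub J hJG (fun L hL => by
          have := h L hL
          rwa [hu, mkStarD_apply _ hL] at this)
        exact ⟨K, Set.mem_insert_of_mem a hKΓ, hK⟩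

theorem closed_le_some (h1 : ∀ I ∈ F0 S, AtomIdeal S I) {Δ : Set (Set ℤ)}
    (hΔsub : Δ ⊆ G0 S) {J : Set ℤ} (hJ : J ∈ G0 S) (hcl : starD S Δ J = J) :
    ∃ K ∈ Δ, starle S J K := by
  have hfin := G0_finite.subset hΔsub
  have hhyp : ∀ L, IsFracIdeal S L → starD S Δ L ⊆ starI S J L := by
    set s := mkStarD Δ (fun K hK => G0_frac (hΔsub hK)) with hs
    have hscl : s.toFun J = J := by
      rw [hs, mkStarD_apply _ (G0_frac hJ)]; exact hcl
    intro L hL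
    have := star_le_starI s (G0_frac hJ) hscl hL
    rwa [hs, mkStarD_apply _ hL] at this
  obtain ⟨K, hKΔ, hK⟩ := starD_le_prime h1 Δ hfin hΔsub J hJ hhyp
  refine ⟨K, hKΔ, ?_⟩
  have := hK J (G0_frac hJ)
  rw [starI_self] at this
  exact Set.Subset.antisymm this (subset_starI K J)

theorem imp14 (h1 : ∀ I ∈ F0 S, AtomIdeal S I) :
    ∀ Δ : Set (Set ℤ), Δ ⊆ G0 S → IsAntichain (starle S) Δ →
      AmapF S (starD S Δ) = Δ := by
  intro Δ hsub hanti
  apply Set.Subset.antisymm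
  · rintro J ⟨hJG, hcl, hmax⟩
    obtain ⟨K, hKΔ, hJK⟩ := closed_le_some h1 hsub hJG hcl
    have hJK' : J = K := hmax K (hsub hKΔ) (starD_mem_self hKΔ) hJK
    rwa [hJK']
  · intro I hIΔ
    refine ⟨hsub hIΔ, starD_mem_self hIΔ, fun J hJG hclJ hIJ => ?_⟩
    obtain ⟨K, hKΔ, hJK⟩ := closed_le_some h1 hsub hJG hclJ
    have hIK : starle S I K :=
      starle_trans (G0_frac (hsub hIΔ)) (G0_frac hJG) (G0_frac (hsub hKΔ)) hIJ hJK
    have hIKeq : I = K := by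
      by_contra hne
      exact hanti hIΔ hKΔ hne hIK
    rw [← hIKeq] at hJK
    exact starle_antisymm (hsub hIΔ) hJG hIJ hJK

theorem imp41
    (h4 : ∀ Δ : Set (Set ℤ), Δ ⊆ G0 S → IsAntichain (starle S) Δ →
      AmapF S (starD S Δ) = Δ) :
    ∀ I ∈ F0 S, AtomIdeal S I := by
  intro I hIF0
  refine ⟨hIF0, fun t u hyp => ?_⟩
  have hIfr := F0_frac hIF0
  by_cases hdiv : Divisorial S I
  · left
    intro J hJ x hx
    refine ⟨star_le_vOp t hJ hx, ?_⟩
    intro y hy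
    have hsub : J ⊆ tr (-y) I := by
      intro j hj
      rw [mem_tr, neg_neg]
      exact hy j hj
    have hv : vOp S J ⊆ tr (-y) (vOp S I) := by
      rw [← vOp_tr]
      exact vOp_mono hsub
    have hxy := hv (star_le_vOp t hJ hx)
    rw [hdiv, mem_tr, neg_neg] at hxy
    rwa [add_comm]
  · have hIG0 : I ∈ G0 S := ⟨hIF0, hdiv⟩
    set Θ := AmapF S t.toFun ∪ AmapF S u.toFun with hΘ
    have hΘsub : Θ ⊆ G0 S := by
      rintro K (hK | hK)
      · exact AmapF_sub _ hK
      · exact AmapF_sub _ hK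
    have hclΘ : starD S Θ I = I := by
      apply Set.Subset.antisymm _ (subset_starD Θ I)
      intro x hx
      have hx' : x ∈ t.toFun I ∩ u.toFun I := by
        rw [star_eq_starD_A t hIfr, star_eq_starD_A u hIfr]
        rw [hΘ, starD_union] at hx
        exact hx
      have := hyp I hIfr hx'
      rwa [starI_self] at this
    set Δ := {K | K ∈ Θ ∧ ∀ K' ∈ Θ, starle S K K' → K = K'} with hΔ
    have hΔsub : Δ ⊆ Θ := fun K hK => hK.1
    have hΔG0 : Δ ⊆ G0 S := hΔsub.trans hΘsub
    have hanti : IsAntichain (starle S) Δ :=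
      fun K hK K' hK' hne h => hne (hK.2 K' hK'.1 h)
    have hDeq : ∀ L, IsFracIdeal S L → starD S Δ L = starD S Θ L := by
      intro L hL
      apply Set.Subset.antisymm _ (starD_anti hΔsub L)
      intro x hx
      rw [mem_starD_iff] at hx ⊢
      refine ⟨hx.1, fun K hK => ?_⟩
      obtain ⟨K', hK'Θ, hKK', hKmax⟩ :=
        exists_max_above Θ.ncard Θ hΘsub (le_refl _) K hK
      have hK'Δ : K' ∈ Δ := ⟨hK'Θ, hKmax⟩
      have hcomp := starle_le_starI (G0_frac (hΘsub hK)) (G0_frac (hΘsub hK'Θ)) hKK' hL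
      exact (hcomp ⟨hx.1, hx.2 K' hK'Δ⟩).2
    have hclΔ : starD S Δ I = I := by rw [hDeq I hIfr]; exact hclΘ
    set s := mkStarD Δ (fun K hK => G0_frac (hΔG0 hK)) with hs
    have hscl : s.toFun I = I := by
      rw [hs, mkStarD_apply _ hIfr]; exact hclΔ
    obtain ⟨K, hKA, hIK⟩ := exists_Amap_above s hIG0 hscl
    have hKΔ : K ∈ Δ := by
      have hAeq : AmapF S s.toFun = Δ := by
        rw [hs, AmapF_mkStarD]
        exact h4 Δ hΔG0 hanti
      rwa [hAeq] at hKA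
    have hKfr := G0_frac (hΔG0 hKΔ)
    have hKI : ∀ L, IsFracIdeal S L → starI S K L ⊆ starI S I L :=
      fun L hL => starle_le_starI hIfr hKfr hIK hL
    rcases hΔsub hKΔ with hKt | hKu
    · left
      intro J hJ
      exact le_trans (star_le_starI t hKfr hKt.2.1 hJ) (hKI J hJ)
    · right
      intro J hJ
      exact le_trans (star_le_starI u hKfr hKu.2.1 hJ) (hKI J hJ)

theorem imp43
    (h4 : ∀ Δ : Set (Set ℤ), Δ ⊆ G0 S → IsAntichain (starle S) Δ →
      AmapF S (starD S Δ) = Δ) :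
    Function.Injective (fun s : StarOp S => AmapF S s.toFun) ∧
      (∀ Δ : Set (Set ℤ), Δ ⊆ G0 S → IsAntichain (starle S) Δ →
        ∃ s : StarOp S, AmapF S s.toFun = Δ) :=
  ⟨Amap_inj, fun Δ hsub hanti =>
    ⟨mkStarD Δ (fun K hK => G0_frac (hsub hK)), by
      rw [AmapF_mkStarD]
      exact h4 Δ hsub hanti⟩⟩

theorem imp34
    (h3 : Function.Injective (fun s : StarOp S => AmapF S s.toFun) ∧
      (∀ Δ : Set (Set ℤ), Δ ⊆ G0 S → IsAntichain (starle S) Δ →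
        ∃ s : StarOp S, AmapF S s.toFun = Δ)) :
    ∀ Δ : Set (Set ℤ), Δ ⊆ G0 S → IsAntichain (starle S) Δ →
      AmapF S (starD S Δ) = Δ := by
  intro Δ hsub hanti
  obtain ⟨s, hs⟩ := h3.2 Δ hsub hanti
  have heq : AmapF S (starD S Δ) = AmapF S s.toFun := by
    apply AmapF_congr
    intro I hI
    rw [star_eq_starD_A s (G0_frac hI), hs]
  rw [heq, hs]

/-- the map `A` into the subtype of antichains -/
def AmapSub (S : NumSgp) :
    StarOp S → {Δ : Set (Set ℤ) // Δ ⊆ G0 S ∧ IsAntichain (starle S) Δ} :=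
  fun s => ⟨AmapF S s.toFun, AmapF_sub _, AmapF_antichain _⟩

theorem AmapSub_inj : Function.Injective (AmapSub S) :=
  fun s t h => Amap_inj (congrArg Subtype.val h)

theorem imp46
    (h4 : ∀ Δ : Set (Set ℤ), Δ ⊆ G0 S → IsAntichain (starle S) Δ →
      AmapF S (starD S Δ) = Δ) :
    Nat.card (StarOp S) =
      Nat.card {Δ : Set (Set ℤ) // Δ ⊆ G0 S ∧ IsAntichain (starle S) Δ} := by
  apply Nat.card_eq_of_bijective (AmapSub S)
  refine ⟨AmapSub_inj, ?_⟩
  rintro ⟨Δ, hsub, hanti⟩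
  refine ⟨mkStarD Δ (fun K hK => G0_frac (hsub hK)), Subtype.ext ?_⟩
  show AmapF S (mkStarD Δ _).toFun = Δ
  rw [AmapF_mkStarD]
  exact h4 Δ hsub hanti

theorem imp63
    (h6 : Nat.card (StarOp S) =
      Nat.card {Δ : Set (Set ℤ) // Δ ⊆ G0 S ∧ IsAntichain (starle S) Δ}) :
    Function.Injective (fun s : StarOp S => AmapF S s.toFun) ∧
      (∀ Δ : Set (Set ℤ), Δ ⊆ G0 S → IsAntichain (starle S) Δ →
        ∃ s : StarOp S, AmapF S s.toFun = Δ) := by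
  have hfinset : Set.Finite {Δ : Set (Set ℤ) | Δ ⊆ G0 S ∧ IsAntichain (starle S) Δ} :=
    (Set.Finite.finite_subsets G0_finite).subset fun Δ hΔ => hΔ.1
  haveI : Finite {Δ : Set (Set ℤ) // Δ ⊆ G0 S ∧ IsAntichain (starle S) Δ} :=
    hfinset.to_subtype
  have hbij : Function.Bijective (AmapSub S) :=
    (Nat.bijective_iff_injective_and_card (AmapSub S)).mpr ⟨AmapSub_inj, h6⟩
  refine ⟨Amap_inj, fun Δ hsub hanti => ?_⟩
  obtain ⟨s, hs⟩ := hbij.2 ⟨Δ, hsub, hanti⟩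
  exact ⟨s, congrArg Subtype.val hs⟩
end AuxNS

end AuxStar
/-- Characterizations of the semigroups for which every ideal of `F₀(S)` is an atom. -/
theorem every_ideal_atom_tfae (S : NumSgp) :
    List.TFAE [
      -- (i) every ideal in `F₀(S)` is an atom
      ∀ I ∈ F0 S, AtomIdeal S I,
      -- (ii) `I^{⋆₁}` and `I^{⋆₂}` are always comparable
      ∀ I, IsFracIdeal S I → ∀ t u : StarOp S, t.toFun I ⊆ u.toFun I ∨ u.toFun I ⊆ t.toFun I,
      -- (iii) `A : Star(S) → Ant(G₀(S))` is bijective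
      Function.Injective (fun s : StarOp S => AmapF S s.toFun) ∧
        (∀ Δ : Set (Set ℤ), Δ ⊆ G0 S → IsAntichain (starle S) Δ →
          ∃ s : StarOp S, AmapF S s.toFun = Δ),
      -- (iv) `A ∘ (Δ ↦ ⋆_Δ)` is the identity on `Ant(G₀(S))`
      ∀ Δ : Set (Set ℤ), Δ ⊆ G0 S → IsAntichain (starle S) Δ → AmapF S (starD S Δ) = Δ,
      -- (v) `A(⋆_Δ) = Δ` for every antichain `Δ` of `(G₀(S), ≤⋆)`
      ∀ Δ : Set (Set ℤ), Δ ⊆ G0 S → IsAntichain (starle S) Δ → AmapF S (starD S Δ) = Δ,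
      -- (vi) `|Star(S)|` equals the number of antichains of `(G₀(S), ≤⋆)`
      Nat.card (StarOp S) =
        Nat.card {Δ : Set (Set ℤ) // Δ ⊆ G0 S ∧ IsAntichain (starle S) Δ}
    ] := by
  tfae_have 1 → 2 := AuxNS.imp12
  tfae_have 2 → 1 := AuxNS.imp21
  tfae_have 1 → 4 := AuxNS.imp14
  tfae_have 4 → 1 := AuxNS.imp41
  tfae_have 4 → 3 := AuxNS.imp43
  tfae_have 3 → 4 := AuxNS.imp34
  tfae_have 4 → 5 := id
  tfae_have 5 → 4 := id
  tfae_have 4 → 6 := AuxNS.imp46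
  tfae_have 6 → 3 := AuxNS.imp63
  tfae_finish
end

section
/- Let S be a numerical semigroup, a ∈ ℕ \ S, and suppose that I ∈ Q_a(S). If |M_a \ I| ≤ 1, then I is an atom of G₀(S). -/
lemma translate_frac (S : NumSgp) (c : ℤ) {I : Set ℤ} (h : IsFracIdeal S I) :
    IsFracIdeal S ((fun x => c + x) '' I) := by
  obtain ⟨⟨x0, hx0⟩, ⟨lb, hlb⟩, hcl⟩ := h
  refine ⟨⟨c + x0, ⟨x0, hx0, rfl⟩⟩, ⟨c + lb, ?_⟩, ?_⟩
  · rintro y ⟨x, hx, rfl⟩; exact add_le_add_right (hlb hx) c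
  · rintro y ⟨x, hx, rfl⟩ s hs
    exact ⟨x + s, hcl x hx s hs, by dsimp only; ring⟩

lemma star_subset_vOp (S : NumSgp) (t : StarOp S) {J : Set ℤ} (hJ : IsFracIdeal S J) :
    t.toFun J ⊆ vOp S J := by
  intro y hy x hx
  have hsub : J ⊆ (fun z => -x + z) '' natS S := by
    intro j hj; exact ⟨x + j, hx j hj, by dsimp only; ring⟩
  have h1 : t.toFun J ⊆ (fun z => -x + z) '' natS S := by
    have h2 := t.mono J _ hJ (translate_frac S (-x) (natS_frac S)) hsub
    rwa [t.transl (natS S) (natS_frac S) (-x), t.star_S] at h2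
  obtain ⟨s, hs, hy'⟩ := h1 hy
  have hy'' : -x + s = y := hy'
  have hxy : y + x = s := by omega
  rw [hxy]; exact hs

lemma star_le_of_closed (S : NumSgp) (t : StarOp S) {I : Set ℤ} (hIf : IsFracIdeal S I)
    (hcl : t.toFun I ⊆ I) : ∀ J, IsFracIdeal S J → t.toFun J ⊆ starI S I J := by
  intro J hJ y hy
  refine ⟨star_subset_vOp S t hJ hy, ?_⟩
  intro x hx
  have hsub : J ⊆ (fun z => -x + z) '' I := fun j hj => ⟨x + j, hx j hj, by dsimp only; ring⟩
  have h1 : t.toFun J ⊆ (fun z => -x + z) '' I := by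
    have h2 := t.mono J _ hJ (translate_frac S (-x) hIf) hsub
    rw [t.transl I hIf (-x)] at h2
    exact h2.trans (Set.image_mono hcl)
  obtain ⟨i, hi, hy'⟩ := h1 hy
  have hy'' : -x + i = y := hy'
  have hxy : y + x = i := by omega
  rw [hxy]; exact hi

lemma exists_gap_bound (S : NumSgp) {a : ℕ} (ha : a ∉ S.carrier) :
    ∃ g : ℕ, g ∉ S.carrier ∧ ∀ n : ℕ, g < n → n ∈ S.carrier := by
  have hne : S.carrierᶜ.Nonempty := ⟨a, ha⟩
  have hbdd : BddAbove S.carrierᶜ := S.cofinite.bddAbove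
  refine ⟨sSup S.carrierᶜ, Nat.sSup_mem hne hbdd, ?_⟩
  intro n hn
  by_contra hns
  exact absurd (le_csSup hbdd hns) (not_le.mpr hn)

lemma vOp_nonneg (S : NumSgp) {a : ℕ} (ha : a ∉ S.carrier) {I : Set ℤ}
    (hIN : I ⊆ {x : ℤ | 0 ≤ x}) : vOp S I ⊆ {x : ℤ | 0 ≤ x} := by
  obtain ⟨g, hg, hg2⟩ := exists_gap_bound S ha
  intro x hx
  simp only [Set.mem_setOf_eq]
  by_contra hneg
  push_neg at hneg
  have hy : ((g : ℤ) - x) ∈ idealSub (natS S) I := by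
    intro j hj
    have hj0 : (0:ℤ) ≤ j := hIN hj
    refine ⟨((g:ℤ) - x + j).toNat, hg2 _ (by omega), by dsimp only; omega⟩
  have hmem := hx _ hy
  rw [show x + ((g:ℤ) - x) = (g : ℤ) by ring] at hmem
  obtain ⟨m, hm, hm2⟩ := hmem
  have hm2' : (m:ℤ) = (g:ℤ) := hm2
  have hmg : m = g := by omega
  exact hg (hmg ▸ hm)

lemma mem_a_of_not_closed (S : NumSgp) {a : ℕ} (ha : a ∉ S.carrier)
    {I : Set ℤ} (hIf : IsFracIdeal S I) (hIN : I ⊆ {x : ℤ | 0 ≤ x})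
    (haI : (a : ℤ) ∉ I) (hgt : ∀ x : ℤ, (a:ℤ) < x → x ∈ I)
    (h : (Mdual S a \ I).ncard ≤ 1)
    (t : StarOp S) (hnc : ¬ t.toFun I ⊆ I) : (a : ℤ) ∈ t.toFun I := by
  by_contra haA
  set A := t.toFun I with hA
  have hAf : IsFracIdeal S A := t.isFrac I hIf
  have hIA : I ⊆ A := t.subset_star I hIf
  have hAv : A ⊆ vOp S I := star_subset_vOp S t hIf
  have hAN : A ⊆ {x : ℤ | 0 ≤ x} := hAv.trans (vOp_nonneg S ha hIN)
  have hsub : A \ I ⊆ Mdual S a \ I := by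
    rintro x ⟨hxA, hxI⟩
    refine ⟨⟨hAN hxA, ?_⟩, hxI⟩
    intro hmem
    apply haA
    have := hAf.2.2 x hxA _ hmem
    rwa [show x + ((a:ℤ) - x) = (a:ℤ) by ring] at this
  obtain ⟨b, hbA, hbI⟩ := Set.not_subset.mp hnc
  have hbM : b ∈ Mdual S a \ I := hsub ⟨hbA, hbI⟩
  have hfin : (Mdual S a \ I).Finite := by
    apply (Set.finite_Icc (0:ℤ) (a:ℤ)).subset
    rintro x ⟨⟨hx0, _⟩, hxI⟩
    refine ⟨hx0, ?_⟩
    by_contra hlt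
    exact hxI (hgt x (by omega))
  have huniq : ∀ y ∈ Mdual S a \ I, y = b :=
    fun y hy => (Set.ncard_le_one hfin).mp h y hy b hbM
  have hAeq : A = I ∪ {b} := by
    apply Set.Subset.antisymm
    · intro y hyA
      by_cases hyI : y ∈ I
      · exact Or.inl hyI
      · exact Or.inr (huniq y (hsub ⟨hyA, hyI⟩))
    · rintro y (hyI | hyb)
      · exact hIA hyI
      · rw [Set.mem_singleton_iff] at hyb; rw [hyb]; exact hbA
  have hb0 : (0:ℤ) ≤ b := hbM.1.1
  have hba : b < (a:ℤ) := by
    rcases lt_trichotomy b (a:ℤ) with h1 | h1 | h1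
    · exact h1
    · exact absurd (h1 ▸ hbA) haA
    · exact absurd (hgt b h1) hbI
  set X : Set ℤ := (fun z => (b - (a:ℤ)) + z) '' A with hX
  have hIX : I ⊆ X := by
    intro i hi
    have hkey : i + ((a:ℤ) - b) ∈ A := by
      by_cases hc : i + ((a:ℤ) - b) ∈ I
      · exact hIA hc
      · have hi0 : (0:ℤ) ≤ i := hIN hi
        have hcM : i + ((a:ℤ) - b) ∈ Mdual S a \ I := by
          refine ⟨⟨by omega, ?_⟩, hc⟩
          rintro ⟨m, hm, hm2⟩
          have hm2' : (m:ℤ) = (a:ℤ) - (i + ((a:ℤ) - b)) := hm2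
          apply hbI
          have hbm : b = i + (m:ℤ) := by omega
          rw [hbm]
          exact hIf.2.2 i hi _ ⟨m, hm, rfl⟩
        have heq := huniq _ hcM
        rw [heq]; exact hbA
    exact ⟨i + ((a:ℤ) - b), hkey, by dsimp only; ring⟩
  have hbX : b ∉ X := by
    rintro ⟨z, hz, hz2⟩
    have hz2' : (b - (a:ℤ)) + z = b := hz2
    have hza : z = (a:ℤ) := by omega
    exact haA (hza ▸ hz)
  have hXf : IsFracIdeal S X := translate_frac S _ hAf
  have htA : t.toFun A = A := t.idem I hIf
  have htX : t.toFun X = X := by rw [hX, t.transl A hAf _, htA]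
  have hfinal : t.toFun I ⊆ I := by
    intro y hy
    have h1 : y ∈ A := hy
    have h2 : y ∈ X := by
      have h3 := t.mono I X hIf hXf hIX hy
      rwa [htX] at h3
    rw [hAeq] at h1
    rcases h1 with h1 | h1
    · exact h1
    · rw [Set.mem_singleton_iff] at h1
      exact absurd (h1 ▸ h2) hbX
  exact hnc hfinal

/-- If `I ∈ Q_a(S)` and `|M_a \ I| ≤ 1`, then `I` is an atom of `G₀(S)`. -/
theorem atom_of_Mdual_diff_small (S : NumSgp) (a : ℕ) (ha : a ∉ S.carrier)
    (I : Set ℤ) (hI : I ∈ Qa S a) (h : (Mdual S a \ I).ncard ≤ 1) :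
    AtomIdeal S I := by
  obtain ⟨hF0, haI, hgt, hav⟩ := hI
  obtain ⟨hIf, hSI, hIN⟩ := hF0
  refine ⟨⟨hIf, hSI, hIN⟩, ?_⟩
  intro t u hyp
  by_cases ht : t.toFun I ⊆ I
  · exact Or.inl (star_le_of_closed S t hIf ht)
  by_cases hu : u.toFun I ⊆ I
  · exact Or.inr (star_le_of_closed S u hIf hu)
  exfalso
  have hat : (a:ℤ) ∈ t.toFun I := mem_a_of_not_closed S ha hIf hIN haI hgt h t ht
  have hau : (a:ℤ) ∈ u.toFun I := mem_a_of_not_closed S ha hIf hIN haI hgt h u hu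
  have hmem := hyp I hIf ⟨hat, hau⟩
  rw [starI_self S I] at hmem
  exact haI hmem
end

section
/- Let S be a numerical semigroup, a ∈ ℕ \ S, and let I, J ∈ Q_a(S) and Δ ⊆ Q_a(S). Then: (a) if I ⊄ J, then a ∈ I^{⋆_J}; (b) if I ⊄ J for every J ∈ Δ, then a ∈ I^{⋆_Δ}; (c) if I ≤⋆ J, then I ⊆ J; (d) if Δ ≠ Λ are two nonempty subsets of Q_a(S) that are antichains with respect to inclusion, then ⋆_Δ ≠ ⋆_Λ. -/
lemma zero_mem_natS (S : NumSgp) : (0:ℤ) ∈ natS S := ⟨0, S.zero_mem, rfl⟩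

lemma subIsub_self (I : Set ℤ) : idealSub I (idealSub I I) = I := by
  ext x
  constructor
  · intro h
    have h0 : (0:ℤ) ∈ idealSub I I := by intro k hk; simpa using hk
    simpa using h 0 h0
  · intro hx j hj
    have := hj x hx
    rwa [add_comm] at this

lemma keyA (S : NumSgp) (a : ℕ) {I J : Set ℤ} (hI : I ∈ Qa S a) (hJ : J ∈ Qa S a)
    (hn : ¬ I ⊆ J) : (a : ℤ) ∈ idealSub J (idealSub J I) := by
  intro j hj
  have h0I : (0:ℤ) ∈ I := hI.1.2.1 (zero_mem_natS S)
  have hjJ : j ∈ J := by simpa using hj 0 h0I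
  have hj0 : (0:ℤ) ≤ j := hJ.1.2.2 hjJ
  have hjne : j ≠ 0 := by
    rintro rfl
    exact hn (fun i hi => by simpa using hj i hi)
  exact hJ.2.2.1 _ (by omega)

lemma mem_starD (S : NumSgp) (a : ℕ) {I : Set ℤ} {Δ : Set (Set ℤ)}
    (hI : I ∈ Qa S a) (hΔ : Δ ⊆ Qa S a) (h : ∀ K ∈ Δ, ¬ I ⊆ K) :
    (a : ℤ) ∈ starD S Δ I :=
  ⟨hI.2.2.2, Set.mem_iInter₂.2 fun K hK => keyA S a hI (hΔ hK) (h K hK)⟩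

lemma notmem_starD (S : NumSgp) (a : ℕ) {K : Set ℤ} {Δ : Set (Set ℤ)}
    (hK : K ∈ Qa S a) (hKΔ : K ∈ Δ) : (a : ℤ) ∉ starD S Δ K := by
  intro h
  have := Set.mem_iInter₂.1 h.2 K hKΔ
  rw [subIsub_self] at this
  exact hK.2.1 this

lemma dAux (S : NumSgp) (a : ℕ) (Δ Λ : Set (Set ℤ)) (hΔ : Δ ⊆ Qa S a) (hΛ : Λ ⊆ Qa S a)
    (hAΔ : IsAntichain (· ⊆ ·) Δ) {I : Set ℤ} (hIΔ : I ∈ Δ) (hIΛ : I ∉ Λ) :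
    ∃ K : Set ℤ, IsFracIdeal S K ∧ starD S Δ K ≠ starD S Λ K := by
  have hIQ := hΔ hIΔ
  by_cases h : ∀ K ∈ Λ, ¬ I ⊆ K
  · refine ⟨I, hIQ.1.1, fun heq => ?_⟩
    have h1 : (a:ℤ) ∈ starD S Λ I := mem_starD S a hIQ hΛ h
    rw [← heq] at h1
    exact notmem_starD S a hIQ hIΔ h1
  · push_neg at h
    obtain ⟨K, hKΛ, hIK⟩ := h
    have hKQ := hΛ hKΛ
    have hKne : K ≠ I := fun e => hIΛ (e ▸ hKΛ)
    have hK : ∀ L ∈ Δ, ¬ K ⊆ L := by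
      intro L hL hKL
      by_cases hIL : I = L
      · subst hIL; exact hKne (subset_antisymm hKL hIK)
      · exact hAΔ hIΔ hL hIL (hIK.trans hKL)
    refine ⟨K, hKQ.1.1, fun heq => ?_⟩
    have h1 : (a:ℤ) ∈ starD S Δ K := mem_starD S a hKQ hΔ hK
    rw [heq] at h1
    exact notmem_starD S a hKQ hKΛ h1

/-- Properties of the ⋆-order on `Q_a(S)`. -/
theorem Qa_star_order (S : NumSgp) (a : ℕ) (ha : a ∉ S.carrier)
    (I J : Set ℤ) (hI : I ∈ Qa S a) (hJ : J ∈ Qa S a)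
    (Δ : Set (Set ℤ)) (hΔ : Δ ⊆ Qa S a) :
    -- (a) if `I ⊄ J` then `a ∈ I^{⋆_J}`
    (¬ I ⊆ J → (a : ℤ) ∈ starI S J I) ∧
    -- (b) if `I ⊄ K` for every `K ∈ Δ`, then `a ∈ I^{⋆_Δ}`
    ((∀ K ∈ Δ, ¬ I ⊆ K) → (a : ℤ) ∈ starD S Δ I) ∧
    -- (c) the ⋆-order on `Q_a` is coarser than inclusion
    (starle S I J → I ⊆ J) ∧
    -- (d) distinct nonempty antichains of `(Q_a, ⊆)` generate different star operations
    (∀ Δ' Λ' : Set (Set ℤ), Δ' ⊆ Qa S a → Λ' ⊆ Qa S a →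
      Δ'.Nonempty → Λ'.Nonempty →
      IsAntichain (· ⊆ ·) Δ' → IsAntichain (· ⊆ ·) Λ' → Δ' ≠ Λ' →
      ∃ K : Set ℤ, IsFracIdeal S K ∧ starD S Δ' K ≠ starD S Λ' K) :=  by
  have hvI : (a : ℤ) ∈ vOp S I := hI.2.2.2
  refine ⟨fun hn => ⟨hvI, keyA S a hI hJ hn⟩, ?_, ?_, ?_⟩
  · intro h
    exact mem_starD S a hI hΔ h
  · intro hle
    by_contra hn
    have : (a:ℤ) ∈ starI S J I := ⟨hvI, keyA S a hI hJ hn⟩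
    rw [hle] at this
    exact hI.2.1 this
  · intro Δ' Λ' hΔ' hΛ' _ _ hA1 hA2 hne
    by_cases hsub : Δ' ⊆ Λ'
    · have : ¬ Λ' ⊆ Δ' := fun h => hne (subset_antisymm hsub h)
      obtain ⟨K, hK1, hK2⟩ := Set.not_subset.1 this
      obtain ⟨L, hL1, hL2⟩ := dAux S a Λ' Δ' hΛ' hΔ' hA2 hK1 hK2
      exact ⟨L, hL1, hL2.symm⟩
    · obtain ⟨K, hK1, hK2⟩ := Set.not_subset.1 hsub
      exact dAux S a Δ' Λ' hΔ' hΛ' hA1 hK1 hK2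
end

section
/- Let S be a numerical semigroup and let a, b ∈ ℕ \ S. Let Δ ⊆ Q_a(S) and Λ ⊆ Q_b(S) be two nonempty sets that are antichains with respect to inclusion. If Δ ≠ Λ (in particular, if a ≠ b), then ⋆_Δ ≠ ⋆_Λ. -/
lemma nonneg_of_idealSub {K J : Set ℤ} (hK : K ⊆ {x : ℤ | 0 ≤ x}) (h0 : (0:ℤ) ∈ J)
    {y : ℤ} (hy : y ∈ idealSub K J) : 0 ≤ y := by
  have := hK (hy 0 h0)
  simpa using this

lemma lemA {I K : Set ℤ} (hIK : I ⊆ K) {a : ℤ} (haK : a ∉ K) :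
    a ∉ idealSub K (idealSub K I) := by
  intro h
  have h0 : (0:ℤ) ∈ idealSub K I := fun j hj => by simpa using hIK hj
  have := h 0 h0
  simp only [add_zero] at this
  exact haK this

lemma lemB1 {K J : Set ℤ} (hK : K ⊆ {x : ℤ | 0 ≤ x}) (h0 : (0:ℤ) ∈ J)
    {a b : ℤ} (hgt : ∀ x : ℤ, b < x → x ∈ K) (hab : b < a) :
    a ∈ idealSub K (idealSub K J) := by
  intro y hy
  have hy0 : 0 ≤ y := nonneg_of_idealSub hK h0 hy
  exact hgt _ (by linarith)

lemma lemB2 {K J : Set ℤ} (hK : K ⊆ {x : ℤ | 0 ≤ x}) (h0 : (0:ℤ) ∈ J)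
    {a : ℤ} (hgt : ∀ x : ℤ, a < x → x ∈ K) (hJK : ¬ J ⊆ K) :
    a ∈ idealSub K (idealSub K J) := by
  intro y hy
  have hy0 : 0 ≤ y := nonneg_of_idealSub hK h0 hy
  rcases eq_or_lt_of_le hy0 with h | h
  · exfalso
    apply hJK
    intro j hj
    have := hy j hj
    rwa [← h, zero_add] at this
  · exact hgt _ (by linarith)

lemma mem_starD_iff (S : NumSgp) (Δ : Set (Set ℤ)) (J : Set ℤ) (x : ℤ) :
    x ∈ starD S Δ J ↔ x ∈ vOp S J ∧ ∀ I ∈ Δ, x ∈ idealSub I (idealSub I J) := by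
  simp [starD, Set.mem_iInter]

lemma key_lemma_s9 (S : NumSgp) (a : ℕ) (Δ Λ : Set (Set ℤ)) (hΔ : Δ ⊆ Qa S a)
    (hΛ : Λ ⊆ Qa S a) (hΔa : IsAntichain (· ⊆ ·) Δ)
    (h : ∀ K, IsFracIdeal S K → starD S Δ K = starD S Λ K)
    {J : Set ℤ} (hJ : J ∈ Δ) : J ∈ Λ := by
  obtain ⟨⟨hJf, hJS, hJn⟩, hJa, hJgt, hJv⟩ := hΔ hJ
  have h0J : (0:ℤ) ∈ J := hJS (zero_mem_natS S)
  -- a ∉ starD S Δ J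
  have ha1 : (a:ℤ) ∉ starD S Δ J := by
    rw [mem_starD_iff]
    rintro ⟨-, h2⟩
    exact lemA subset_rfl hJa (h2 J hJ)
  rw [h J hJf] at ha1
  rw [mem_starD_iff] at ha1
  push_neg at ha1
  obtain ⟨K, hKΛ, hKa⟩ := ha1 hJv
  obtain ⟨⟨hKf, hKS, hKn⟩, hKa', hKgt, hKv⟩ := hΛ hKΛ
  have hJK : J ⊆ K := by
    by_contra hc
    exact hKa (lemB2 hKn h0J hKgt hc)
  -- now from K ∈ Λ, a ∉ starD S Λ K = starD S Δ K
  have h0K : (0:ℤ) ∈ K := hKS (zero_mem_natS S)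
  have ha2 : (a:ℤ) ∉ starD S Δ K := by
    rw [h K hKf, mem_starD_iff]
    rintro ⟨-, h2⟩
    exact lemA subset_rfl hKa' (h2 K hKΛ)
  rw [mem_starD_iff] at ha2
  push_neg at ha2
  obtain ⟨K', hK'Δ, hK'a⟩ := ha2 hKv
  obtain ⟨⟨hK'f, hK'S, hK'n⟩, hK'a', hK'gt, hK'v⟩ := hΔ hK'Δ
  have hKK' : K ⊆ K' := by
    by_contra hc
    exact hK'a (lemB2 hK'n h0K hK'gt hc)
  have hJK' : J = K' := by
    by_contra hne
    exact hΔa hJ hK'Δ hne (hJK.trans hKK')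
  have : K = J := Set.Subset.antisymm (hJK' ▸ hKK') hJK
  exact this ▸ hKΛ

/-- Distinct nonempty inclusion-antichains `Δ ⊆ Q_a(S)`, `Λ ⊆ Q_b(S)` generate
different star operations. -/
theorem Qa_Qb_antichains_different_stars (S : NumSgp) (a b : ℕ)
    (ha : a ∉ S.carrier) (hb : b ∉ S.carrier)
    (Δ Λ : Set (Set ℤ)) (hΔ : Δ ⊆ Qa S a) (hΛ : Λ ⊆ Qa S b)
    (hΔne : Δ.Nonempty) (hΛne : Λ.Nonempty)
    (hΔa : IsAntichain (· ⊆ ·) Δ) (hΛa : IsAntichain (· ⊆ ·) Λ)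
    (hne : Δ ≠ Λ) :
    ∃ K : Set ℤ, IsFracIdeal S K ∧ starD S Δ K ≠ starD S Λ K := by
  rcases lt_trichotomy a b with hab | hab | hab
  · -- a < b : take J ∈ Λ; b ∈ starD Δ J but b ∉ starD Λ J
    obtain ⟨J, hJΛ⟩ := hΛne
    obtain ⟨⟨hJf, hJS, hJn⟩, hJb, hJgt, hJv⟩ := hΛ hJΛ
    have h0J : (0:ℤ) ∈ J := hJS (zero_mem_natS S)
    refine ⟨J, hJf, fun heq => ?_⟩
    have hmem : (b:ℤ) ∈ starD S Δ J := by
      rw [mem_starD_iff]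
      refine ⟨hJv, fun I hI => ?_⟩
      obtain ⟨⟨hIf, hIS, hIn⟩, hIa, hIgt, hIv⟩ := hΔ hI
      exact lemB1 hIn h0J hIgt (by exact_mod_cast hab)
    rw [heq, mem_starD_iff] at hmem
    exact lemA subset_rfl hJb (hmem.2 J hJΛ)
  · -- a = b : use the key lemma in both directions
    subst hab
    by_contra hcon
    push_neg at hcon
    have h : ∀ K, IsFracIdeal S K → starD S Δ K = starD S Λ K := hcon
    have h' : ∀ K, IsFracIdeal S K → starD S Λ K = starD S Δ K :=
      fun K hK => (h K hK).symm
    apply hne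
    apply Set.Subset.antisymm
    · exact fun J hJ => key_lemma_s9 S a Δ Λ hΔ hΛ hΔa h hJ
    · exact fun J hJ => key_lemma_s9 S a Λ Δ hΛ hΔ hΛa h' hJ
  · -- b < a : take J ∈ Δ; a ∈ starD Λ J but a ∉ starD Δ J
    obtain ⟨J, hJΔ⟩ := hΔne
    obtain ⟨⟨hJf, hJS, hJn⟩, hJa, hJgt, hJv⟩ := hΔ hJΔ
    have h0J : (0:ℤ) ∈ J := hJS (zero_mem_natS S)
    refine ⟨J, hJf, fun heq => ?_⟩
    have hmem : (a:ℤ) ∈ starD S Λ J := by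
      rw [mem_starD_iff]
      refine ⟨hJv, fun I hI => ?_⟩
      obtain ⟨⟨hIf, hIS, hIn⟩, hIb, hIgt, hIv⟩ := hΛ hI
      exact lemB1 hIn h0J hIgt (by exact_mod_cast hab)
    rw [← heq, mem_starD_iff] at hmem
    exact lemA subset_rfl hJa (hmem.2 J hJΔ)
end
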